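/- arXiv:2008.11499 — 11 statements merged into one kernel-verified Lean document; each statement's English description precedes it below -/
import Mathlib

section
/- Strong X-bisimilarity and strong reactive bisimilarity are equivalence relations on the set of processes of a labelled transition system with time-outs. -/
/-- Actions of an LTS with time-outs: visible actions from `A`,
the hidden action `τ`, and the time-out action `t`. -/
inductive Act (A : Type*) where
  | vis (a : A)
  | tau
  | to

variable {A : Type*} {Proc : Type*}

/-- `Idle Tr P X` expresses `I(P) ∩ (X ∪ {τ}) = ∅`:
`P` has no outgoing `τ`-transition and no `a`-transition for `a ∈ X`. -/
def Idle (Tr : Proc → Act A → Proc → Prop) (P : Proc) (X : Set A) : Prop :=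
  (∀ a ∈ X, ∀ P', ¬ Tr P (Act.vis a) P') ∧ (∀ P', ¬ Tr P Act.tau P')

/-- A strong reactive bisimulation: a symmetric relation on
`(P × Pow(A) × P) ∪ (P × P)`, given by its two components `R2` and `R3`,
satisfying the six clauses of Definition "reactive bisimilarity". -/
structure IsSRB (Tr : Proc → Act A → Proc → Prop)
    (R2 : Proc → Proc → Prop) (R3 : Proc → Set A → Proc → Prop) : Prop where
  symm2 : ∀ P Q, R2 P Q → R2 Q P
  symm3 : ∀ P (X : Set A) Q, R3 P X Q → R3 Q X P
  tau2 : ∀ P Q P', R2 P Q → Tr P Act.tau P' → ∃ Q', Tr Q Act.tau Q' ∧ R2 P' Q'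
  env2 : ∀ P Q, R2 P Q → ∀ X : Set A, R3 P X Q
  vis3 : ∀ P (X : Set A) Q a P', R3 P X Q → a ∈ X → Tr P (Act.vis a) P' →
      ∃ Q', Tr Q (Act.vis a) Q' ∧ R2 P' Q'
  tau3 : ∀ P (X : Set A) Q P', R3 P X Q → Tr P Act.tau P' →
      ∃ Q', Tr Q Act.tau Q' ∧ R3 P' X Q'
  idle3 : ∀ P (X : Set A) Q, R3 P X Q → Idle Tr P X → R2 P Q
  timeout3 : ∀ P (X : Set A) Q P', R3 P X Q → Idle Tr P X → Tr P Act.to P' →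
      ∃ Q', Tr Q Act.to Q' ∧ R3 P' X Q'

/-- Strong reactive bisimilarity `P ↔ᵣ Q`. -/
def RBisim (Tr : Proc → Act A → Proc → Prop) (P Q : Proc) : Prop :=
  ∃ R2 R3, IsSRB Tr R2 R3 ∧ R2 P Q

/-- Strong `X`-bisimilarity `P ↔ₓ Q`. -/
def XBisim (Tr : Proc → Act A → Proc → Prop) (X : Set A) (P Q : Proc) : Prop :=
  ∃ R2 R3, IsSRB Tr R2 R3 ∧ R3 P X Q

/-- The identity relation is a strong reactive bisimulation. -/
lemma isSRB_eq (Tr : Proc → Act A → Proc → Prop) :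
    IsSRB Tr (fun P Q => P = Q) (fun P _ Q => P = Q) where
  symm2 := fun _ _ h => h.symm
  symm3 := fun _ _ _ h => h.symm
  tau2 := fun _ _ P' h ht => by subst h; exact ⟨P', ht, rfl⟩
  env2 := fun _ _ h _ => h
  vis3 := fun _ _ _ _ P' h _ ht => by subst h; exact ⟨P', ht, rfl⟩
  tau3 := fun _ _ _ P' h ht => by subst h; exact ⟨P', ht, rfl⟩
  idle3 := fun _ _ _ h _ => h
  timeout3 := fun _ _ _ P' h _ ht => by subst h; exact ⟨P', ht, rfl⟩

/-- Idleness transfers along the `R3` component of an SRB. -/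
lemma idle_transfer {Tr : Proc → Act A → Proc → Prop} {R2 R3}
    (h : IsSRB Tr R2 R3) {P X Q} (hr : R3 P X Q) (hi : Idle Tr P X) :
    Idle Tr Q X := by
  have hs := h.symm3 P X Q hr
  constructor
  · intro a ha Q' ht
    obtain ⟨P', hP', _⟩ := h.vis3 Q X P a Q' hs ha ht
    exact hi.1 a ha P' hP'
  · intro Q' ht
    obtain ⟨P', hP', _⟩ := h.tau3 Q X P Q' hs ht
    exact hi.2 P' hP'

/-- The symmetrized composition of two SRBs is an SRB. -/
lemma isSRB_comp {Tr : Proc → Act A → Proc → Prop} {R2 R3 S2 S3}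
    (hR : IsSRB Tr R2 R3) (hS : IsSRB Tr S2 S3) :
    IsSRB Tr
      (fun P Q => (∃ M, R2 P M ∧ S2 M Q) ∨ (∃ M, S2 P M ∧ R2 M Q))
      (fun P X Q => (∃ M, R3 P X M ∧ S3 M X Q) ∨ (∃ M, S3 P X M ∧ R3 M X Q)) := by
  constructor
  · rintro P Q (⟨M, h1, h2⟩ | ⟨M, h1, h2⟩)
    · exact Or.inr ⟨M, hS.symm2 _ _ h2, hR.symm2 _ _ h1⟩
    · exact Or.inl ⟨M, hR.symm2 _ _ h2, hS.symm2 _ _ h1⟩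
  · rintro P X Q (⟨M, h1, h2⟩ | ⟨M, h1, h2⟩)
    · exact Or.inr ⟨M, hS.symm3 _ _ _ h2, hR.symm3 _ _ _ h1⟩
    · exact Or.inl ⟨M, hR.symm3 _ _ _ h2, hS.symm3 _ _ _ h1⟩
  · rintro P Q P' (⟨M, h1, h2⟩ | ⟨M, h1, h2⟩) ht
    · obtain ⟨M', hM', h1'⟩ := hR.tau2 _ _ _ h1 ht
      obtain ⟨Q', hQ', h2'⟩ := hS.tau2 _ _ _ h2 hM'
      exact ⟨Q', hQ', Or.inl ⟨M', h1', h2'⟩⟩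
    · obtain ⟨M', hM', h1'⟩ := hS.tau2 _ _ _ h1 ht
      obtain ⟨Q', hQ', h2'⟩ := hR.tau2 _ _ _ h2 hM'
      exact ⟨Q', hQ', Or.inr ⟨M', h1', h2'⟩⟩
  · rintro P Q (⟨M, h1, h2⟩ | ⟨M, h1, h2⟩) X
    · exact Or.inl ⟨M, hR.env2 _ _ h1 X, hS.env2 _ _ h2 X⟩
    · exact Or.inr ⟨M, hS.env2 _ _ h1 X, hR.env2 _ _ h2 X⟩
  · rintro P X Q a P' (⟨M, h1, h2⟩ | ⟨M, h1, h2⟩) ha ht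
    · obtain ⟨M', hM', h1'⟩ := hR.vis3 _ _ _ _ _ h1 ha ht
      obtain ⟨Q', hQ', h2'⟩ := hS.vis3 _ _ _ _ _ h2 ha hM'
      exact ⟨Q', hQ', Or.inl ⟨M', h1', h2'⟩⟩
    · obtain ⟨M', hM', h1'⟩ := hS.vis3 _ _ _ _ _ h1 ha ht
      obtain ⟨Q', hQ', h2'⟩ := hR.vis3 _ _ _ _ _ h2 ha hM'
      exact ⟨Q', hQ', Or.inr ⟨M', h1', h2'⟩⟩
  · rintro P X Q P' (⟨M, h1, h2⟩ | ⟨M, h1, h2⟩) ht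
    · obtain ⟨M', hM', h1'⟩ := hR.tau3 _ _ _ _ h1 ht
      obtain ⟨Q', hQ', h2'⟩ := hS.tau3 _ _ _ _ h2 hM'
      exact ⟨Q', hQ', Or.inl ⟨M', h1', h2'⟩⟩
    · obtain ⟨M', hM', h1'⟩ := hS.tau3 _ _ _ _ h1 ht
      obtain ⟨Q', hQ', h2'⟩ := hR.tau3 _ _ _ _ h2 hM'
      exact ⟨Q', hQ', Or.inr ⟨M', h1', h2'⟩⟩
  · rintro P X Q (⟨M, h1, h2⟩ | ⟨M, h1, h2⟩) hi
    · exact Or.inl ⟨M, hR.idle3 _ _ _ h1 hi,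
        hS.idle3 _ _ _ h2 (idle_transfer hR h1 hi)⟩
    · exact Or.inr ⟨M, hS.idle3 _ _ _ h1 hi,
        hR.idle3 _ _ _ h2 (idle_transfer hS h1 hi)⟩
  · rintro P X Q P' (⟨M, h1, h2⟩ | ⟨M, h1, h2⟩) hi ht
    · obtain ⟨M', hM', h1'⟩ := hR.timeout3 _ _ _ _ h1 hi ht
      obtain ⟨Q', hQ', h2'⟩ :=
        hS.timeout3 _ _ _ _ h2 (idle_transfer hR h1 hi) hM'
      exact ⟨Q', hQ', Or.inl ⟨M', h1', h2'⟩⟩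
    · obtain ⟨M', hM', h1'⟩ := hS.timeout3 _ _ _ _ h1 hi ht
      obtain ⟨Q', hQ', h2'⟩ :=
        hR.timeout3 _ _ _ _ h2 (idle_transfer hS h1 hi) hM'
      exact ⟨Q', hQ', Or.inr ⟨M', h1', h2'⟩⟩

/-- Strong X-bisimilarity and strong reactive bisimilarity are equivalence relations. -/
theorem srb_equivalence (Tr : Proc → Act A → Proc → Prop) :
    Equivalence (RBisim Tr) ∧ ∀ X : Set A, Equivalence (XBisim Tr X) := by
  constructor
  · refine ⟨fun P => ⟨_, _, isSRB_eq Tr, rfl⟩, ?_, ?_⟩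
    · rintro P Q ⟨R2, R3, hR, h⟩
      exact ⟨R2, R3, hR, hR.symm2 _ _ h⟩
    · rintro P Q R ⟨R2, R3, hR, h1⟩ ⟨S2, S3, hS, h2⟩
      exact ⟨_, _, isSRB_comp hR hS, Or.inl ⟨Q, h1, h2⟩⟩
  · intro X
    refine ⟨fun P => ⟨_, _, isSRB_eq Tr, rfl⟩, ?_, ?_⟩
    · rintro P Q ⟨R2, R3, hR, h⟩
      exact ⟨R2, R3, hR, hR.symm3 _ _ _ h⟩
    · rintro P Q R ⟨R2, R3, hR, h1⟩ ⟨S2, S3, hS, h2⟩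
      exact ⟨_, _, isSRB_comp hR hS, Or.inl ⟨Q, h1, h2⟩⟩
end

section
/- For all processes P, Q and all X ⊆ A: P ↔ᵣ Q iff P and Q satisfy exactly the same infinitary reactive Hennessy-Milner logic formulas under ⊨, and P ↔ₓ Q iff P and Q satisfy exactly the same formulas under ⊨_X. -/
variable {A : Type*} {Proc : Type*}

universe u

/-- Infinitary Hennessy–Milner logic formulas with time-out modality `⟨X⟩`. -/
inductive Formula (A : Type u) : Type (u + 1) where
  | conj (I : Type u) (f : I → Formula A)
  | neg (φ : Formula A)
  | diamVis (a : A) (φ : Formula A)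
  | diamTau (φ : Formula A)
  | diamEnv (X : Set A) (φ : Formula A)

variable {A' : Type u} {Proc' : Type u}

/-- The satisfaction relations `⊨` (second argument `none`) and `⊨_X`
(second argument `some X`), defined by mutual structural recursion; the clause
"`P ⊨_X φ` whenever `I(P)∩(X∪{τ})=∅` and `P ⊨ φ`" appears as an extra disjunct
at every constructor. -/
def SatG (Tr : Proc' → Act A' → Proc' → Prop) :
    Formula A' → Option (Set A') → Proc' → Prop
  | .conj _ f, none, P => ∀ i, SatG Tr (f i) none P
  | .conj _ f, some X, P => (∀ i, SatG Tr (f i) (some X) P) ∨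
      (Idle Tr P X ∧ ∀ i, SatG Tr (f i) none P)
  | .neg φ, none, P => ¬ SatG Tr φ none P
  | .neg φ, some X, P => (¬ SatG Tr φ (some X) P) ∨
      (Idle Tr P X ∧ ¬ SatG Tr φ none P)
  | .diamVis a φ, none, P => ∃ P', Tr P (Act.vis a) P' ∧ SatG Tr φ none P'
  | .diamVis a φ, some X, P =>
      (a ∈ X ∧ ∃ P', Tr P (Act.vis a) P' ∧ SatG Tr φ none P') ∨
      (Idle Tr P X ∧ ∃ P', Tr P (Act.vis a) P' ∧ SatG Tr φ none P')
  | .diamTau φ, none, P => ∃ P', Tr P Act.tau P' ∧ SatG Tr φ none P'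
  | .diamTau φ, some X, P => (∃ P', Tr P Act.tau P' ∧ SatG Tr φ (some X) P') ∨
      (Idle Tr P X ∧ ∃ P', Tr P Act.tau P' ∧ SatG Tr φ none P')
  | .diamEnv Y φ, none, P =>
      Idle Tr P Y ∧ ∃ P', Tr P Act.to P' ∧ SatG Tr φ (some Y) P'
  | .diamEnv Y φ, some X, P =>
      Idle Tr P X ∧ Idle Tr P Y ∧ ∃ P', Tr P Act.to P' ∧ SatG Tr φ (some Y) P'

section Aux

variable (Tr : Proc' → Act A' → Proc' → Prop)

/-- The true formula. -/
private def topF : Formula A' := .conj (ULift Empty) fun i => i.down.elim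

/-- Binary conjunction. -/
private def andF (φ ψ : Formula A') : Formula A' :=
  .conj (ULift Bool) fun b => bif b.down then φ else ψ

/-- Binary disjunction. -/
private def orF (φ ψ : Formula A') : Formula A' :=
  .neg (andF (.neg φ) (.neg ψ))

/-- Conjunction with a meta-level proposition : `p ∧ φ`. -/
private def guardF (p : Prop) (φ : Formula A') : Formula A' :=
  .neg (.conj (ULift (PLift p)) fun _ => .neg φ)

/-- A formula characterising idleness w.r.t. `X`. -/
private def idleF (X : Set A') : Formula A' :=
  andF (.neg (.diamTau topF)) (.conj X fun a => .neg (.diamVis a.1 topF))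

variable {Tr}

private lemma sat_topF_none (P : Proc') : SatG Tr topF none P := by
  simp only [SatG, topF]; exact fun i => i.down.elim

private lemma sat_topF_some (X : Set A') (P : Proc') : SatG Tr topF (some X) P := by
  simp only [SatG, topF]; exact Or.inl fun i => i.down.elim

private lemma sat_andF_none {φ ψ : Formula A'} {P : Proc'} :
    SatG Tr (andF φ ψ) none P ↔ SatG Tr φ none P ∧ SatG Tr ψ none P := by
  simp only [SatG, andF]
  constructor
  · intro h; exact ⟨h ⟨true⟩, h ⟨false⟩⟩
  · rintro ⟨h1, h2⟩ ⟨b⟩; cases b <;> simpa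

private lemma sat_orF_none {φ ψ : Formula A'} {P : Proc'} :
    SatG Tr (orF φ ψ) none P ↔ SatG Tr φ none P ∨ SatG Tr ψ none P := by
  rw [show SatG Tr (orF φ ψ) none P ↔ ¬ SatG Tr (andF (.neg φ) (.neg ψ)) none P
    from Iff.rfl, sat_andF_none]
  simp only [SatG]
  tauto

private lemma sat_guardF_none {p : Prop} {φ : Formula A'} {P : Proc'} :
    SatG Tr (guardF p φ) none P ↔ p ∧ SatG Tr φ none P := by
  simp only [guardF, SatG]
  constructor
  · intro h
    by_cases hp : p
    · refine ⟨hp, ?_⟩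
      by_contra hs
      exact h fun _ => hs
    · exact absurd (fun i => (hp i.down.down).elim) h
  · rintro ⟨hp, hs⟩ h
    exact h ⟨⟨hp⟩⟩ hs

private lemma sat_idleF_none {X : Set A'} {P : Proc'} :
    SatG Tr (idleF X) none P ↔ Idle Tr P X := by
  unfold idleF
  rw [sat_andF_none]
  simp only [SatG, Idle]
  constructor
  · rintro ⟨h1, h2⟩
    refine ⟨fun a ha P' hT => h2 ⟨a, ha⟩ ⟨P', hT, sat_topF_none P'⟩,
      fun P' hT => h1 ⟨P', hT, sat_topF_none P'⟩⟩
  · rintro ⟨h1, h2⟩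
    refine ⟨fun ⟨P', hT, _⟩ => h2 P' hT, fun a ⟨P', hT, _⟩ => h1 a.1 a.2 P' hT⟩

/-- If `P` is idle w.r.t. `X`, then `⊨_X` coincides with `⊨`. -/
private lemma sat_idle {X : Set A'} {P : Proc'} (hI : Idle Tr P X) :
    ∀ φ : Formula A', SatG Tr φ (some X) P ↔ SatG Tr φ none P := by
  intro φ
  induction φ with
  | conj I f ih =>
    simp only [SatG]
    constructor
    · rintro (h | ⟨-, h⟩)
      · exact fun i => (ih i).mp (h i)
      · exact h
    · intro h; exact Or.inr ⟨hI, h⟩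
  | neg φ ih =>
    simp only [SatG]
    constructor
    · rintro (h | ⟨-, h⟩)
      · exact fun hs => h ((ih).mpr hs)
      · exact h
    · intro h; exact Or.inr ⟨hI, h⟩
  | diamVis a φ ih =>
    simp only [SatG]
    constructor
    · rintro (⟨-, h⟩ | ⟨-, h⟩) <;> exact h
    · intro h; exact Or.inr ⟨hI, h⟩
  | diamTau φ ih =>
    simp only [SatG]
    constructor
    · rintro (⟨P', hT, -⟩ | ⟨-, P', hT, -⟩) <;> exact (hI.2 P' hT).elim
    · rintro ⟨P', hT, -⟩; exact (hI.2 P' hT).elim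
  | diamEnv Y φ ih =>
    simp only [SatG]
    constructor
    · rintro ⟨-, h⟩; exact h
    · intro h; exact ⟨hI, h⟩

/-- Translation: `P ⊨_X φ` iff `P ⊨ trF X φ`. -/
private def trF (X : Set A') : Formula A' → Formula A'
  | .conj I f => orF (.conj I fun i => trF X (f i)) (andF (idleF X) (.conj I f))
  | .neg φ => orF (.neg (trF X φ)) (andF (idleF X) (.neg φ))
  | .diamVis a φ => orF (guardF (a ∈ X) (.diamVis a φ)) (andF (idleF X) (.diamVis a φ))
  | .diamTau φ => orF (.diamTau (trF X φ)) (andF (idleF X) (.diamTau φ))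
  | .diamEnv Y φ => andF (idleF X) (.diamEnv Y φ)

private lemma sat_trF {X : Set A'} :
    ∀ (φ : Formula A') (P : Proc'),
      SatG Tr (trF X φ) none P ↔ SatG Tr φ (some X) P := by
  intro φ
  induction φ with
  | conj I f ih =>
    intro P
    unfold trF
    rw [sat_orF_none, sat_andF_none, sat_idleF_none]
    simp only [SatG]
    constructor
    · rintro (h | ⟨hI, h⟩)
      · exact Or.inl fun i => (ih i P).mp (h i)
      · exact Or.inr ⟨hI, h⟩
    · rintro (h | ⟨hI, h⟩)
      · exact Or.inl fun i => (ih i P).mpr (h i)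
      · exact Or.inr ⟨hI, h⟩
  | neg φ ih =>
    intro P
    unfold trF
    rw [sat_orF_none, sat_andF_none, sat_idleF_none]
    simp only [SatG]
    rw [ih P]
  | diamVis a φ ih =>
    intro P
    unfold trF
    rw [sat_orF_none, sat_guardF_none, sat_andF_none, sat_idleF_none]
    simp only [SatG]
  | diamTau φ ih =>
    intro P
    unfold trF
    rw [sat_orF_none, sat_andF_none, sat_idleF_none]
    simp only [SatG]
    constructor
    · rintro (⟨P', hT, h⟩ | h)
      · exact Or.inl ⟨P', hT, (ih P').mp h⟩
      · exact Or.inr h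
    · rintro (⟨P', hT, h⟩ | h)
      · exact Or.inl ⟨P', hT, (ih P').mpr h⟩
      · exact Or.inr h
  | diamEnv Y φ ih =>
    intro P
    unfold trF
    rw [sat_andF_none, sat_idleF_none]
    simp only [SatG, and_assoc]

/-- Idleness transfers along `R3` components of an SRB. -/
private lemma srb_idle {R2 : Proc' → Proc' → Prop} {R3 : Proc' → Set A' → Proc' → Prop}
    (h : IsSRB Tr R2 R3) {P Q : Proc'} {X : Set A'}
    (hR : R3 P X Q) (hI : Idle Tr P X) : Idle Tr Q X := by
  constructor
  · intro a ha Q' hT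
    obtain ⟨P', hP, -⟩ := h.vis3 Q X P a Q' (h.symm3 _ _ _ hR) ha hT
    exact hI.1 a ha P' hP
  · intro Q' hT
    obtain ⟨P', hP, -⟩ := h.tau3 Q X P Q' (h.symm3 _ _ _ hR) hT
    exact hI.2 P' hP

/-- Soundness: related processes satisfy the same formulas. -/
private lemma srb_sound {R2 : Proc' → Proc' → Prop} {R3 : Proc' → Set A' → Proc' → Prop}
    (h : IsSRB Tr R2 R3) : ∀ φ : Formula A',
      (∀ P Q, R2 P Q → SatG Tr φ none P → SatG Tr φ none Q) ∧
      (∀ (X : Set A') P Q, R3 P X Q → SatG Tr φ (some X) P → SatG Tr φ (some X) Q) := by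
  intro φ
  induction φ with
  | conj I f ih =>
    constructor
    · intro P Q hR hs i
      exact (ih i).1 P Q hR (hs i)
    · rintro X P Q hR (hs | ⟨hI, hs⟩)
      · exact Or.inl fun i => (ih i).2 X P Q hR (hs i)
      · exact Or.inr ⟨srb_idle h hR hI,
          fun i => (ih i).1 P Q (h.idle3 P X Q hR hI) (hs i)⟩
  | neg φ ih =>
    constructor
    · intro P Q hR hs hQ
      exact hs ((ih).1 Q P (h.symm2 _ _ hR) hQ)
    · rintro X P Q hR (hs | ⟨hI, hs⟩)
      · exact Or.inl fun hQ => hs ((ih).2 X Q P (h.symm3 _ _ _ hR) hQ)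
      · exact Or.inr ⟨srb_idle h hR hI,
          fun hQ => hs ((ih).1 Q P (h.symm2 _ _ (h.idle3 P X Q hR hI)) hQ)⟩
  | diamVis a φ ih =>
    constructor
    · rintro P Q hR ⟨P', hT, hs⟩
      obtain ⟨Q', hTQ, hR'⟩ :=
        h.vis3 P Set.univ Q a P' (h.env2 P Q hR Set.univ) (Set.mem_univ a) hT
      exact ⟨Q', hTQ, (ih).1 P' Q' hR' hs⟩
    · rintro X P Q hR (⟨ha, P', hT, hs⟩ | ⟨hI, P', hT, hs⟩)
      · obtain ⟨Q', hTQ, hR'⟩ := h.vis3 P X Q a P' hR ha hT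
        exact Or.inl ⟨ha, Q', hTQ, (ih).1 P' Q' hR' hs⟩
      · have hR2 := h.idle3 P X Q hR hI
        obtain ⟨Q', hTQ, hR'⟩ :=
          h.vis3 P Set.univ Q a P' (h.env2 P Q hR2 Set.univ) (Set.mem_univ a) hT
        exact Or.inr ⟨srb_idle h hR hI, Q', hTQ, (ih).1 P' Q' hR' hs⟩
  | diamTau φ ih =>
    constructor
    · rintro P Q hR ⟨P', hT, hs⟩
      obtain ⟨Q', hTQ, hR'⟩ := h.tau2 P Q P' hR hT
      exact ⟨Q', hTQ, (ih).1 P' Q' hR' hs⟩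
    · rintro X P Q hR (⟨P', hT, hs⟩ | ⟨hI, P', hT, -⟩)
      · obtain ⟨Q', hTQ, hR'⟩ := h.tau3 P X Q P' hR hT
        exact Or.inl ⟨Q', hTQ, (ih).2 X P' Q' hR' hs⟩
      · exact (hI.2 P' hT).elim
  | diamEnv Y φ ih =>
    constructor
    · rintro P Q hR ⟨hI, P', hT, hs⟩
      have hR3 : R3 P Y Q := h.env2 P Q hR Y
      obtain ⟨Q', hTQ, hR'⟩ := h.timeout3 P Y Q P' hR3 hI hT
      exact ⟨srb_idle h hR3 hI, Q', hTQ, (ih).2 Y P' Q' hR' hs⟩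
    · rintro X P Q hR ⟨hIX, hIY, P', hT, hs⟩
      have hR2 := h.idle3 P X Q hR hIX
      have hR3 : R3 P Y Q := h.env2 P Q hR2 Y
      obtain ⟨Q', hTQ, hR'⟩ := h.timeout3 P Y Q P' hR3 hIY hT
      exact ⟨srb_idle h hR hIX, srb_idle h hR3 hIY, Q', hTQ,
        (ih).2 Y P' Q' hR' hs⟩

variable (Tr)

/-- Logical equivalence under `⊨`. -/
private def LE2 (P Q : Proc') : Prop :=
  ∀ φ : Formula A', SatG Tr φ none P ↔ SatG Tr φ none Q

/-- Logical equivalence under `⊨_X`. -/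
private def LE3 (P : Proc') (X : Set A') (Q : Proc') : Prop :=
  ∀ φ : Formula A', SatG Tr φ (some X) P ↔ SatG Tr φ (some X) Q

variable {Tr}

private lemma distinguish_none {P' Q' : Proc'} (h : ¬ LE2 Tr P' Q') :
    ∃ ψ : Formula A', SatG Tr ψ none P' ∧ ¬ SatG Tr ψ none Q' := by
  simp only [LE2, not_forall] at h
  obtain ⟨φ, hφ⟩ := h
  by_cases hP : SatG Tr φ none P'
  · exact ⟨φ, hP, fun hQ => hφ ⟨fun _ => hQ, fun _ => hP⟩⟩
  · refine ⟨.neg φ, ?_, ?_⟩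
    · simpa [SatG] using hP
    · simp only [SatG, not_not]
      by_contra hQ
      exact hφ ⟨fun hp => (hP hp).elim, fun hq => (hQ hq).elim⟩

private lemma distinguish_some {P' Q' : Proc'} {X : Set A'} (h : ¬ LE3 Tr P' X Q') :
    ∃ ψ : Formula A', SatG Tr ψ (some X) P' ∧ ¬ SatG Tr ψ (some X) Q' := by
  simp only [LE3, not_forall] at h
  obtain ⟨φ, hφ⟩ := h
  by_cases hP : SatG Tr φ (some X) P'
  · exact ⟨φ, hP, fun hQ => hφ ⟨fun _ => hQ, fun _ => hP⟩⟩
  · by_cases hQ : SatG Tr φ (some X) Q'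
    · refine ⟨.neg φ, Or.inl hP, ?_⟩
      simp only [SatG, not_or, not_and, not_not]
      exact ⟨hQ, fun hI => (sat_idle hI φ).mp hQ⟩
    · exact absurd ⟨fun hp => (hP hp).elim, fun hq => (hQ hq).elim⟩ hφ

private lemma le3_idle {P Q : Proc'} {X : Set A'} (hR : LE3 Tr P X Q)
    (hI : Idle Tr P X) : Idle Tr Q X := by
  constructor
  · intro a ha Q' hT
    have hQ : SatG Tr (.diamVis a topF) (some X) Q :=
      Or.inl ⟨ha, Q', hT, sat_topF_none Q'⟩
    have hP := (hR (.diamVis a topF)).mpr hQ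
    rcases hP with ⟨-, P', hTP, -⟩ | ⟨-, P', hTP, -⟩ <;> exact hI.1 a ha P' hTP
  · intro Q' hT
    have hQ : SatG Tr (.diamTau topF) (some X) Q :=
      Or.inl ⟨Q', hT, sat_topF_some X Q'⟩
    have hP := (hR (.diamTau topF)).mpr hQ
    rcases hP with ⟨P', hTP, -⟩ | ⟨-, P', hTP, -⟩ <;> exact hI.2 P' hTP

/-- Completeness: logical equivalence is a strong reactive bisimulation. -/
private lemma le_isSRB : IsSRB Tr (LE2 Tr) (fun P X Q => LE3 Tr P X Q) := by
  constructor
  · intro P Q h φ; exact (h φ).symm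
  · intro P X Q h φ; exact (h φ).symm
  · -- tau2
    intro P Q P' hR hT
    by_contra hc
    push_neg at hc
    have hf : ∀ i : {Q' // Tr Q Act.tau Q'},
        ∃ ψ : Formula A', SatG Tr ψ none P' ∧ ¬ SatG Tr ψ none i.1 :=
      fun i => distinguish_none (hc i.1 i.2)
    choose f hf1 hf2 using hf
    have hP : SatG Tr (.diamTau (.conj _ f)) none P := ⟨P', hT, fun i => hf1 i⟩
    obtain ⟨Q', hTQ, hs⟩ := (hR (.diamTau (.conj _ f))).mp hP
    exact hf2 ⟨Q', hTQ⟩ (hs ⟨Q', hTQ⟩)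
  · -- env2
    intro P Q hR X φ
    rw [← sat_trF φ P, ← sat_trF φ Q]
    exact hR (trF X φ)
  · -- vis3
    intro P X Q a P' hR ha hT
    by_contra hc
    push_neg at hc
    have hf : ∀ i : {Q' // Tr Q (Act.vis a) Q'},
        ∃ ψ : Formula A', SatG Tr ψ none P' ∧ ¬ SatG Tr ψ none i.1 :=
      fun i => distinguish_none (hc i.1 i.2)
    choose f hf1 hf2 using hf
    have hP : SatG Tr (.diamVis a (.conj _ f)) (some X) P :=
      Or.inl ⟨ha, P', hT, fun i => hf1 i⟩
    have hQ := (hR (.diamVis a (.conj _ f))).mp hP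
    rcases hQ with ⟨-, Q', hTQ, hs⟩ | ⟨-, Q', hTQ, hs⟩ <;>
      exact hf2 ⟨Q', hTQ⟩ (hs ⟨Q', hTQ⟩)
  · -- tau3
    intro P X Q P' hR hT
    by_contra hc
    push_neg at hc
    have hf : ∀ i : {Q' // Tr Q Act.tau Q'},
        ∃ ψ : Formula A', SatG Tr ψ (some X) P' ∧ ¬ SatG Tr ψ (some X) i.1 :=
      fun i => distinguish_some (hc i.1 i.2)
    choose f hf1 hf2 using hf
    have hP : SatG Tr (.diamTau (.conj _ f)) (some X) P :=
      Or.inl ⟨P', hT, Or.inl fun i => hf1 i⟩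
    have hQ := (hR (.diamTau (.conj _ f))).mp hP
    rcases hQ with ⟨Q', hTQ, hs⟩ | ⟨hI, Q', hTQ, -⟩
    · rcases hs with hs | ⟨hI', hs⟩
      · exact hf2 ⟨Q', hTQ⟩ (hs ⟨Q', hTQ⟩)
      · exact hf2 ⟨Q', hTQ⟩ ((sat_idle hI' _).mpr (hs ⟨Q', hTQ⟩))
    · exact hI.2 Q' hTQ
  · -- idle3
    intro P X Q hR hI φ
    rw [← sat_idle hI φ, ← sat_idle (le3_idle hR hI) φ]
    exact hR φ
  · -- timeout3
    intro P X Q P' hR hI hT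
    by_contra hc
    push_neg at hc
    have hf : ∀ i : {Q' // Tr Q Act.to Q'},
        ∃ ψ : Formula A', SatG Tr ψ (some X) P' ∧ ¬ SatG Tr ψ (some X) i.1 :=
      fun i => distinguish_some (hc i.1 i.2)
    choose f hf1 hf2 using hf
    have hP : SatG Tr (.diamEnv X (.conj _ f)) (some X) P :=
      ⟨hI, hI, P', hT, Or.inl fun i => hf1 i⟩
    obtain ⟨-, -, Q', hTQ, hs⟩ := (hR (.diamEnv X (.conj _ f))).mp hP
    rcases hs with hs | ⟨hI', hs⟩
    · exact hf2 ⟨Q', hTQ⟩ (hs ⟨Q', hTQ⟩)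
    · exact hf2 ⟨Q', hTQ⟩ ((sat_idle hI' _).mpr (hs ⟨Q', hTQ⟩))

end Aux

/-- Modal characterisation of strong reactive bisimilarity and of strong
`X`-bisimilarity. -/
theorem modal_characterisation (Tr : Proc' → Act A' → Proc' → Prop)
    (P Q : Proc') (X : Set A') :
    (RBisim Tr P Q ↔ ∀ φ : Formula A', SatG Tr φ none P ↔ SatG Tr φ none Q) ∧
    (XBisim Tr X P Q ↔
      ∀ φ : Formula A', SatG Tr φ (some X) P ↔ SatG Tr φ (some X) Q) := by
  constructor
  · constructor
    · rintro ⟨R2, R3, hSRB, hR⟩ φ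
      exact ⟨(srb_sound hSRB φ).1 P Q hR,
        (srb_sound hSRB φ).1 Q P (hSRB.symm2 _ _ hR)⟩
    · intro hLE
      exact ⟨LE2 Tr, fun P X Q => LE3 Tr P X Q, le_isSRB, hLE⟩
  · constructor
    · rintro ⟨R2, R3, hSRB, hR⟩ φ
      exact ⟨(srb_sound hSRB φ).2 X P Q hR,
        (srb_sound hSRB φ).2 X Q P (hSRB.symm3 _ _ _ hR)⟩
    · intro hLE
      exact ⟨LE2 Tr, fun P X Q => LE3 Tr P X Q, le_isSRB, hLE⟩
end

section
/- Let P be a CCSP process with no outgoing τ-transition, let S, X ⊆ A with I(P) ∩ X ⊆ S, and let Y = X \ (S \ I(P)). Then θ_X(P ∥_S Q) is strongly bisimilar to θ_X(P ∥_S θ_Y(Q)) for every process Q. -/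
variable {A : Type*} {Proc : Type*}

/-- The state space is closed under environment operators `θ_X`, whose
transitions are exactly those generated by the three operational rules. -/
def ThetaSpec (Tr : Proc → Act A → Proc → Prop) (theta : Set A → Proc → Proc) : Prop :=
  ∀ (X : Set A) (P : Proc) (α : Act A) (Q : Proc),
    Tr (theta X P) α Q ↔
      ((α = Act.tau ∧ ∃ P', Tr P Act.tau P' ∧ Q = theta X P') ∨
       (∃ a, α = Act.vis a ∧ a ∈ X ∧ Tr P α Q) ∨
       (α ≠ Act.tau ∧ Idle Tr P X ∧ Tr P α Q))

/-- A strong time-out bisimulation. -/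
def IsSTB (Tr : Proc → Act A → Proc → Prop) (theta : Set A → Proc → Proc)
    (B : Proc → Proc → Prop) : Prop :=
  (∀ P Q, B P Q → B Q P) ∧
  (∀ P Q (α : Act A) P', B P Q → α ≠ Act.to → Tr P α P' →
      ∃ Q', Tr Q α Q' ∧ B P' Q') ∧
  (∀ P Q (X : Set A) P', B P Q → Idle Tr P X → Tr P Act.to P' →
      ∃ Q', Tr Q Act.to Q' ∧ B (theta X P') (theta X Q'))

/-- Strong reactive bisimilarity, characterised as the largest strong
time-out bisimulation. -/
def RBisimT (Tr : Proc → Act A → Proc → Prop) (theta : Set A → Proc → Proc)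
    (P Q : Proc) : Prop :=
  ∃ B, IsSTB Tr theta B ∧ B P Q

/-- A strong bisimulation (treating `τ` and `t` like any other action). -/
def IsSB (Tr : Proc → Act A → Proc → Prop) (B : Proc → Proc → Prop) : Prop :=
  (∀ P Q, B P Q → B Q P) ∧
  (∀ P Q (α : Act A) P', B P Q → Tr P α P' → ∃ Q', Tr Q α Q' ∧ B P' Q')

/-- Strong bisimilarity. -/
def SBisim (Tr : Proc → Act A → Proc → Prop) (P Q : Proc) : Prop :=
  ∃ B, IsSB Tr B ∧ B P Q

/-- The visible initial actions of `P`. -/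
def VisInit (Tr : Proc → Act A → Proc → Prop) (P : Proc) : Set A :=
  {a | ∃ P', Tr P (Act.vis a) P'}

/-- Transitions of the CCSP parallel composition `P ∥_S Q` are exactly those
generated by the three operational rules. -/
def ParSpec (Tr : Proc → Act A → Proc → Prop)
    (par : Set A → Proc → Proc → Proc) : Prop :=
  ∀ (S : Set A) (P Q : Proc) (α : Act A) (R : Proc),
    Tr (par S P Q) α R ↔
      ((∀ a, α = Act.vis a → a ∉ S) ∧ ∃ P', Tr P α P' ∧ R = par S P' Q) ∨
      ((∀ a, α = Act.vis a → a ∉ S) ∧ ∃ Q', Tr Q α Q' ∧ R = par S P Q') ∨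
      (∃ a, α = Act.vis a ∧ a ∈ S ∧
        ∃ P' Q', Tr P α P' ∧ Tr Q α Q' ∧ R = par S P' Q')


/-! ### Auxiliary lemmas about `theta` and `par` -/

theorem th_tau {Tr : Proc → Act A → Proc → Prop} {theta : Set A → Proc → Proc}
    (hθ : ThetaSpec Tr theta) {Z : Set A} {Q Q' : Proc} (h : Tr Q Act.tau Q') :
    Tr (theta Z Q) Act.tau (theta Z Q') :=
  (hθ Z Q _ _).mpr (Or.inl ⟨rfl, Q', h, rfl⟩)

theorem th_vis {Tr : Proc → Act A → Proc → Prop} {theta : Set A → Proc → Proc}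
    (hθ : ThetaSpec Tr theta) {Z : Set A} {Q T : Proc} {a : A}
    (ha : a ∈ Z) (h : Tr Q (Act.vis a) T) : Tr (theta Z Q) (Act.vis a) T :=
  (hθ Z Q _ _).mpr (Or.inr (Or.inl ⟨a, rfl, ha, h⟩))

theorem th_idle {Tr : Proc → Act A → Proc → Prop} {theta : Set A → Proc → Proc}
    (hθ : ThetaSpec Tr theta) {Z : Set A} {Q T : Proc} {α : Act A}
    (hα : α ≠ Act.tau) (hq : Idle Tr Q Z) (h : Tr Q α T) : Tr (theta Z Q) α T :=
  (hθ Z Q _ _).mpr (Or.inr (Or.inr ⟨hα, hq, h⟩))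

theorem th_tau_inv {Tr : Proc → Act A → Proc → Prop} {theta : Set A → Proc → Proc}
    (hθ : ThetaSpec Tr theta) {Z : Set A} {Q T : Proc}
    (h : Tr (theta Z Q) Act.tau T) : ∃ Q', Tr Q Act.tau Q' ∧ T = theta Z Q' := by
  rw [hθ] at h
  rcases h with ⟨_, Q', h1, h2⟩ | ⟨a, ha, _, _⟩ | ⟨hne, _, _⟩
  · exact ⟨Q', h1, h2⟩
  · cases ha
  · exact absurd rfl hne

theorem th_inv {Tr : Proc → Act A → Proc → Prop} {theta : Set A → Proc → Proc}
    (hθ : ThetaSpec Tr theta) {Z : Set A} {Q T : Proc} {α : Act A}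
    (hα : α ≠ Act.tau) (h : Tr (theta Z Q) α T) : Tr Q α T := by
  rw [hθ] at h
  rcases h with ⟨h1, _⟩ | ⟨a, _, _, h3⟩ | ⟨_, _, h3⟩
  · exact absurd h1 hα
  · exact h3
  · exact h3

/-- Auxiliary relation: the candidate strong bisimulation. -/
def BRel (Tr : Proc → Act A → Proc → Prop) (theta : Set A → Proc → Proc)
    (par : Set A → Proc → Proc → Proc) (S X Y : Set A) (P : Proc) :
    Proc → Proc → Prop := fun U V =>
  U = V
  ∨ (∃ Q, (U = theta X (par S P Q) ∧ V = theta X (par S P (theta Y Q))) ∨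
          (V = theta X (par S P Q) ∧ U = theta X (par S P (theta Y Q))))
  ∨ (∃ P' Q, Idle Tr Q Y ∧
        ((U = par S P' Q ∧ V = par S P' (theta Y Q)) ∨
         (V = par S P' Q ∧ U = par S P' (theta Y Q))))

/-- If `P` has no `τ`-transition, `I(P) ∩ X ⊆ S` and `Y = X \ (S \ I(P))`, then
`θ_X(P ∥_S Q) ↔ θ_X(P ∥_S θ_Y(Q))` for every `Q`. -/
theorem theta_par (Tr : Proc → Act A → Proc → Prop)
    (theta : Set A → Proc → Proc) (par : Set A → Proc → Proc → Proc)
    (hθ : ThetaSpec Tr theta) (hpar : ParSpec Tr par)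
    (P : Proc) (S X Y : Set A)
    (hP : ∀ P', ¬ Tr P Act.tau P')
    (hIX : VisInit Tr P ∩ X ⊆ S)
    (hY : Y = X \ (S \ VisInit Tr P)) :
    ∀ Q : Proc, SBisim Tr (theta X (par S P Q)) (theta X (par S P (theta Y Q))) := by
  -- par introduction rules
  have parL : ∀ {P₁ Q₁ P₂ : Proc} {α : Act A}, (∀ a, α = Act.vis a → a ∉ S) →
      Tr P₁ α P₂ → Tr (par S P₁ Q₁) α (par S P₂ Q₁) :=
    fun h ht => (hpar S _ _ _ _).mpr (Or.inl ⟨h, _, ht, rfl⟩)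
  have parR : ∀ {P₁ Q₁ Q₂ : Proc} {α : Act A}, (∀ a, α = Act.vis a → a ∉ S) →
      Tr Q₁ α Q₂ → Tr (par S P₁ Q₁) α (par S P₁ Q₂) :=
    fun h ht => (hpar S _ _ _ _).mpr (Or.inr (Or.inl ⟨h, _, ht, rfl⟩))
  have parS : ∀ {P₁ Q₁ P₂ Q₂ : Proc} {a : A}, a ∈ S →
      Tr P₁ (Act.vis a) P₂ → Tr Q₁ (Act.vis a) Q₂ →
      Tr (par S P₁ Q₁) (Act.vis a) (par S P₂ Q₂) :=
    fun ha h1 h2 => (hpar S _ _ _ _).mpr (Or.inr (Or.inr ⟨_, rfl, ha, _, _, h1, h2, rfl⟩))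
  -- facts about Y
  have hYX : ∀ a, a ∈ Y → a ∈ X := by rw [hY]; exact fun a h => h.1
  have hY1 : ∀ a, a ∈ X → a ∉ S → a ∈ Y := by
    rw [hY]; exact fun a h1 h2 => ⟨h1, fun hc => h2 hc.1⟩
  have hY2 : ∀ a (P'' : Proc), a ∈ X → Tr P (Act.vis a) P'' → a ∈ Y := by
    rw [hY]; exact fun a P'' h1 h2 => ⟨h1, fun hc => hc.2 ⟨P'', h2⟩⟩
  have hYS : ∀ a, a ∈ Y → a ∈ S → ∃ P'', Tr P (Act.vis a) P'' := by
    rw [hY]; intro a h hS; by_contra hn; exact h.2 ⟨hS, hn⟩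
  have hIXS : ∀ a (P'' : Proc), Tr P (Act.vis a) P'' → a ∈ X → a ∈ S :=
    fun a P'' h hx => hIX ⟨⟨P'', h⟩, hx⟩
  -- idleness transfer
  have idle_Q : ∀ Q₁, Idle Tr (par S P Q₁) X → Idle Tr Q₁ Y := by
    rintro Q₁ ⟨h1, h2⟩
    constructor
    · intro a haY T hT
      by_cases hS : a ∈ S
      · obtain ⟨P'', hP''⟩ := hYS a haY hS
        exact h1 a (hYX a haY) _ (parS hS hP'' hT)
      · exact h1 a (hYX a haY) _ (parR (fun b hb => by injection hb with h; exact h ▸ hS) hT)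
    · intro T hT
      exact h2 _ (parR (fun b hb => by cases hb) hT)
  have idle_LR : ∀ Q₁, Idle Tr (par S P Q₁) X → Idle Tr (par S P (theta Y Q₁)) X := by
    intro Q₁ hL
    have hq := idle_Q Q₁ hL
    obtain ⟨h1, h2⟩ := hL
    constructor
    · intro a haX T hT
      rw [hpar] at hT
      rcases hT with ⟨hside, P₂, hP₂, _⟩ | ⟨hside, Q₂, hQ₂, _⟩ |
        ⟨b, hb, hbS, P₂, Q₂, hP₂, hQ₂, _⟩
      · exact hside a rfl (hIXS a P₂ hP₂ haX)
      · exact h1 a haX _ (parR hside (th_inv hθ (by simp) hQ₂))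
      · injection hb with hb; subst hb
        exact h1 a haX _ (parS hbS hP₂ (th_inv hθ (by simp) hQ₂))
    · intro T hT
      rw [hpar] at hT
      rcases hT with ⟨_, P₂, hP₂, _⟩ | ⟨_, Q₂, hQ₂, _⟩ | ⟨b, hb, _⟩
      · exact hP P₂ hP₂
      · obtain ⟨Q', hQ', _⟩ := th_tau_inv hθ hQ₂
        exact hq.2 _ hQ'
      · cases hb
  have idle_RL : ∀ Q₁, Idle Tr (par S P (theta Y Q₁)) X → Idle Tr (par S P Q₁) X := by
    rintro Q₁ ⟨h1, h2⟩
    constructor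
    · intro a haX T hT
      rw [hpar] at hT
      rcases hT with ⟨hside, P₂, hP₂, _⟩ | ⟨hside, Q₂, hQ₂, _⟩ |
        ⟨b, hb, hbS, P₂, Q₂, hP₂, hQ₂, _⟩
      · exact hside a rfl (hIXS a P₂ hP₂ haX)
      · exact h1 a haX _ (parR hside (th_vis hθ (hY1 a haX (hside a rfl)) hQ₂))
      · injection hb with hb; subst hb
        exact h1 a haX _ (parS hbS hP₂ (th_vis hθ (hY2 a P₂ haX hP₂) hQ₂))
    · intro T hT
      rw [hpar] at hT
      rcases hT with ⟨_, P₂, hP₂, _⟩ | ⟨hside, Q₂, hQ₂, _⟩ | ⟨b, hb, _⟩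
      · exact hP P₂ hP₂
      · exact h2 _ (parR hside (th_tau hθ hQ₂))
      · cases hb
  -- step lemmas for the par-family pairs
  have stepPar : ∀ P₁ Q₁, Idle Tr Q₁ Y → ∀ (α : Act A) W, Tr (par S P₁ Q₁) α W →
      ∃ W', Tr (par S P₁ (theta Y Q₁)) α W' ∧ BRel Tr theta par S X Y P W W' := by
    intro P₁ Q₁ hq α W hW
    rw [hpar] at hW
    rcases hW with ⟨hside, P₂, hP₂, rfl⟩ | ⟨hside, Q₂, hQ₂, rfl⟩ |
      ⟨a, rfl, haS, P₂, Q₂, hP₂, hQ₂, rfl⟩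
    · exact ⟨par S P₂ (theta Y Q₁), parL hside hP₂,
        Or.inr (Or.inr ⟨P₂, Q₁, hq, Or.inl ⟨rfl, rfl⟩⟩)⟩
    · have hατ : α ≠ Act.tau := by rintro rfl; exact hq.2 _ hQ₂
      exact ⟨par S P₁ Q₂, parR hside (th_idle hθ hατ hq hQ₂), Or.inl rfl⟩
    · exact ⟨par S P₂ Q₂, parS haS hP₂ (th_idle hθ (by simp) hq hQ₂), Or.inl rfl⟩
  have stepPar' : ∀ P₁ Q₁, Idle Tr Q₁ Y → ∀ (α : Act A) W,
      Tr (par S P₁ (theta Y Q₁)) α W →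
      ∃ W', Tr (par S P₁ Q₁) α W' ∧ BRel Tr theta par S X Y P W W' := by
    intro P₁ Q₁ hq α W hW
    rw [hpar] at hW
    rcases hW with ⟨hside, P₂, hP₂, rfl⟩ | ⟨hside, Q₂, hQ₂, rfl⟩ |
      ⟨a, rfl, haS, P₂, Q₂, hP₂, hQ₂, rfl⟩
    · exact ⟨par S P₂ Q₁, parL hside hP₂,
        Or.inr (Or.inr ⟨P₂, Q₁, hq, Or.inr ⟨rfl, rfl⟩⟩)⟩
    · have hατ : α ≠ Act.tau := by
        rintro rfl
        obtain ⟨Q', hQ', _⟩ := th_tau_inv hθ hQ₂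
        exact hq.2 _ hQ'
      exact ⟨par S P₁ Q₂, parR hside (th_inv hθ hατ hQ₂), Or.inl rfl⟩
    · exact ⟨par S P₂ Q₂, parS haS hP₂ (th_inv hθ (by simp) hQ₂), Or.inl rfl⟩
  -- step lemmas for the main pairs
  have stepMain : ∀ Q₁ (α : Act A) W, Tr (theta X (par S P Q₁)) α W →
      ∃ W', Tr (theta X (par S P (theta Y Q₁))) α W' ∧ BRel Tr theta par S X Y P W W' := by
    intro Q₁ α W hW
    rw [hθ] at hW
    rcases hW with ⟨rfl, L', hL', rfl⟩ | ⟨a, rfl, haX, hW⟩ | ⟨hατ, hidle, hW⟩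
    · rw [hpar] at hL'
      rcases hL' with ⟨_, P₂, hP₂, _⟩ | ⟨hside, Q₂, hQ₂, rfl⟩ | ⟨b, hb, _⟩
      · exact absurd hP₂ (hP P₂)
      · refine ⟨theta X (par S P (theta Y Q₂)), ?_,
          Or.inr (Or.inl ⟨Q₂, Or.inl ⟨rfl, rfl⟩⟩)⟩
        exact (hθ X _ _ _).mpr (Or.inl ⟨rfl, _, parR hside (th_tau hθ hQ₂), rfl⟩)
      · cases hb
    · rw [hpar] at hW
      rcases hW with ⟨hside, P₂, hP₂, rfl⟩ | ⟨hside, Q₂, hQ₂, rfl⟩ |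
        ⟨b, hb, hbS, P₂, Q₂, hP₂, hQ₂, rfl⟩
      · exact absurd (hIXS a P₂ hP₂ haX) (hside a rfl)
      · refine ⟨par S P Q₂, ?_, Or.inl rfl⟩
        exact (hθ X _ _ _).mpr (Or.inr (Or.inl ⟨a, rfl, haX,
          parR hside (th_vis hθ (hY1 a haX (hside a rfl)) hQ₂)⟩))
      · injection hb with hb; subst hb
        refine ⟨par S P₂ Q₂, ?_, Or.inl rfl⟩
        exact (hθ X _ _ _).mpr (Or.inr (Or.inl ⟨a, rfl, haX,
          parS hbS hP₂ (th_vis hθ (hY2 a P₂ haX hP₂) hQ₂)⟩))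
    · have hq := idle_Q Q₁ hidle
      have hR := idle_LR Q₁ hidle
      rw [hpar] at hW
      rcases hW with ⟨hside, P₂, hP₂, rfl⟩ | ⟨hside, Q₂, hQ₂, rfl⟩ |
        ⟨b, rfl, hbS, P₂, Q₂, hP₂, hQ₂, rfl⟩
      · refine ⟨par S P₂ (theta Y Q₁), ?_,
          Or.inr (Or.inr ⟨P₂, Q₁, hq, Or.inl ⟨rfl, rfl⟩⟩)⟩
        exact (hθ X _ _ _).mpr (Or.inr (Or.inr ⟨hατ, hR, parL hside hP₂⟩))
      · refine ⟨par S P Q₂, ?_, Or.inl rfl⟩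
        exact (hθ X _ _ _).mpr (Or.inr (Or.inr ⟨hατ, hR,
          parR hside (th_idle hθ hατ hq hQ₂)⟩))
      · refine ⟨par S P₂ Q₂, ?_, Or.inl rfl⟩
        exact (hθ X _ _ _).mpr (Or.inr (Or.inr ⟨hατ, hR,
          parS hbS hP₂ (th_idle hθ (by simp) hq hQ₂)⟩))
  have stepMain' : ∀ Q₁ (α : Act A) W, Tr (theta X (par S P (theta Y Q₁))) α W →
      ∃ W', Tr (theta X (par S P Q₁)) α W' ∧ BRel Tr theta par S X Y P W W' := by
    intro Q₁ α W hW
    rw [hθ] at hW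
    rcases hW with ⟨rfl, R', hR', rfl⟩ | ⟨a, rfl, haX, hW⟩ | ⟨hατ, hidle, hW⟩
    · rw [hpar] at hR'
      rcases hR' with ⟨_, P₂, hP₂, _⟩ | ⟨hside, T, hT, rfl⟩ | ⟨b, hb, _⟩
      · exact absurd hP₂ (hP P₂)
      · obtain ⟨Q₂, hQ₂, rfl⟩ := th_tau_inv hθ hT
        refine ⟨theta X (par S P Q₂), ?_, Or.inr (Or.inl ⟨Q₂, Or.inr ⟨rfl, rfl⟩⟩)⟩
        exact (hθ X _ _ _).mpr (Or.inl ⟨rfl, _, parR hside hQ₂, rfl⟩)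
      · cases hb
    · rw [hpar] at hW
      rcases hW with ⟨hside, P₂, hP₂, rfl⟩ | ⟨hside, Q₂, hQ₂, rfl⟩ |
        ⟨b, hb, hbS, P₂, Q₂, hP₂, hQ₂, rfl⟩
      · exact absurd (hIXS a P₂ hP₂ haX) (hside a rfl)
      · refine ⟨par S P Q₂, ?_, Or.inl rfl⟩
        exact (hθ X _ _ _).mpr (Or.inr (Or.inl ⟨a, rfl, haX,
          parR hside (th_inv hθ (by simp) hQ₂)⟩))
      · injection hb with hb; subst hb
        refine ⟨par S P₂ Q₂, ?_, Or.inl rfl⟩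
        exact (hθ X _ _ _).mpr (Or.inr (Or.inl ⟨a, rfl, haX,
          parS hbS hP₂ (th_inv hθ (by simp) hQ₂)⟩))
    · have hL := idle_RL Q₁ hidle
      have hq := idle_Q Q₁ hL
      rw [hpar] at hW
      rcases hW with ⟨hside, P₂, hP₂, rfl⟩ | ⟨hside, Q₂, hQ₂, rfl⟩ |
        ⟨b, rfl, hbS, P₂, Q₂, hP₂, hQ₂, rfl⟩
      · refine ⟨par S P₂ Q₁, ?_,
          Or.inr (Or.inr ⟨P₂, Q₁, hq, Or.inr ⟨rfl, rfl⟩⟩)⟩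
        exact (hθ X _ _ _).mpr (Or.inr (Or.inr ⟨hατ, hL, parL hside hP₂⟩))
      · refine ⟨par S P Q₂, ?_, Or.inl rfl⟩
        exact (hθ X _ _ _).mpr (Or.inr (Or.inr ⟨hατ, hL,
          parR hside (th_inv hθ hατ hQ₂)⟩))
      · refine ⟨par S P₂ Q₂, ?_, Or.inl rfl⟩
        exact (hθ X _ _ _).mpr (Or.inr (Or.inr ⟨hατ, hL,
          parS hbS hP₂ (th_inv hθ (by simp) hQ₂)⟩))
  -- assemble the bisimulation
  intro Q
  refine ⟨BRel Tr theta par S X Y P, ⟨?_, ?_⟩, Or.inr (Or.inl ⟨Q, Or.inl ⟨rfl, rfl⟩⟩)⟩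
  · rintro U V (rfl | ⟨Q₁, h | h⟩ | ⟨P₁, Q₁, hq, h | h⟩)
    · exact Or.inl rfl
    · exact Or.inr (Or.inl ⟨Q₁, Or.inr h⟩)
    · exact Or.inr (Or.inl ⟨Q₁, Or.inl h⟩)
    · exact Or.inr (Or.inr ⟨P₁, Q₁, hq, Or.inr h⟩)
    · exact Or.inr (Or.inr ⟨P₁, Q₁, hq, Or.inl h⟩)
  · rintro U V α U' (rfl | ⟨Q₁, ⟨rfl, rfl⟩ | ⟨rfl, rfl⟩⟩ |
      ⟨P₁, Q₁, hq, ⟨rfl, rfl⟩ | ⟨rfl, rfl⟩⟩) hU'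
    · exact ⟨U', hU', Or.inl rfl⟩
    · exact stepMain Q₁ α U' hU'
    · exact stepMain' Q₁ α U' hU'
    · exact stepPar P₁ Q₁ hq α U' hU'
    · exact stepPar' P₁ Q₁ hq α U' hU'
end

section
/- For any process P and sets X, I ⊆ A, θ_X(τ_I(P)) is strongly bisimilar to θ_X(τ_I(θ_{X∪I}(P))). -/
variable {A : Type*} {Proc : Type*}

/-- Transitions of the CCSP abstraction operator `τ_I` are exactly those
generated by its two operational rules. -/
def HideSpec (Tr : Proc → Act A → Proc → Prop)
    (hideOp : Set A → Proc → Proc) : Prop :=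
  ∀ (I : Set A) (P : Proc) (α : Act A) (Q : Proc),
    Tr (hideOp I P) α Q ↔
      ((∀ a, α = Act.vis a → a ∉ I) ∧ ∃ P', Tr P α P' ∧ Q = hideOp I P') ∨
      (α = Act.tau ∧ ∃ a ∈ I, ∃ P', Tr P (Act.vis a) P' ∧ Q = hideOp I P')

/-!
A non-τ move of `θ_X(τ_I(P))` requires an action in `X` or that `τ_I(P)` be idle on `X`, i.e.
that `P` be idle on `X ∪ I`; either way the inner `θ_{X∪I}` lets the same move of `P` through, so
both sides have the same non-τ moves with the same targets. A τ-move of `P` leads to a pair of the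
same shape, and a hidden action `b ∈ I` of `P` leads on both sides to the same process
`θ_X(τ_I(P'))`, because `θ_{X∪I}` passes `b` without wrapping the target. Hence the identity
together with all such pairs (in both orders) is a strong bisimulation.
-/

variable {Tr : Proc → Act A → Proc → Prop}

theorem SBisim.of_matching {ι : Type*} (L R : ι → Proc)
    (hLR : ∀ i α q, Tr (L i) α q → ∃ q', Tr (R i) α q' ∧ (q = q' ∨ ∃ j, q = L j ∧ q' = R j))
    (hRL : ∀ i α q, Tr (R i) α q → ∃ q', Tr (L i) α q' ∧ (q = q' ∨ ∃ j, q = R j ∧ q' = L j))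
    (i : ι) : SBisim Tr (L i) (R i) := by
  let B : Proc → Proc → Prop := fun u v =>
    u = v ∨ (∃ j, u = L j ∧ v = R j) ∨ ∃ j, u = R j ∧ v = L j
  refine ⟨B, ⟨?_, ?_⟩, Or.inr (Or.inl ⟨i, rfl, rfl⟩)⟩
  · rintro u v (rfl | ⟨j, rfl, rfl⟩ | ⟨j, rfl, rfl⟩)
    · exact Or.inl rfl
    · exact Or.inr (Or.inr ⟨j, rfl, rfl⟩)
    · exact Or.inr (Or.inl ⟨j, rfl, rfl⟩)
  · rintro u v α u' (rfl | ⟨j, rfl, rfl⟩ | ⟨j, rfl, rfl⟩) hu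
    · exact ⟨u', hu, Or.inl rfl⟩
    · obtain ⟨v', hv, rfl | hj⟩ := hLR j α u' hu
      exacts [⟨_, hv, Or.inl rfl⟩, ⟨v', hv, Or.inr (Or.inl hj)⟩]
    · obtain ⟨v', hv, rfl | hj⟩ := hRL j α u' hu
      exacts [⟨_, hv, Or.inl rfl⟩, ⟨v', hv, Or.inr (Or.inr hj)⟩]

namespace ThetaSpec

variable {theta : Set A → Proc → Proc} {X : Set A} {P Q : Proc}

theorem tr_tau_iff (hθ : ThetaSpec Tr theta) :
    Tr (theta X P) .tau Q ↔ ∃ P', Tr P .tau P' ∧ Q = theta X P' := by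
  simp [hθ X P]

theorem tr_iff_of_ne_tau (hθ : ThetaSpec Tr theta) {α : Act A} (hα : α ≠ .tau) :
    Tr (theta X P) α Q ↔ ((∃ a ∈ X, α = .vis a) ∨ Idle Tr P X) ∧ Tr P α Q := by
  rw [hθ X P]
  grind

theorem tr_vis_iff_of_mem (hθ : ThetaSpec Tr theta) {a : A} (ha : a ∈ X) :
    Tr (theta X P) (.vis a) Q ↔ Tr P (.vis a) Q := by
  rw [hθ.tr_iff_of_ne_tau (α := .vis a) (by simp)]
  exact and_iff_right_of_imp fun _ ↦ Or.inl ⟨a, ha, rfl⟩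

theorem idle_iff (hθ : ThetaSpec Tr theta) : Idle Tr (theta X P) X ↔ Idle Tr P X := by
  refine and_congr (forall₂_congr fun a ha ↦ forall_congr' fun _ ↦
    not_congr (hθ.tr_vis_iff_of_mem ha)) ?_
  simp only [hθ.tr_tau_iff, not_exists, not_and]
  exact ⟨fun h P' hP' ↦ h _ P' hP' rfl, fun h _ P' hP' _ ↦ h P' hP'⟩

end ThetaSpec

namespace HideSpec

variable {hideOp : Set A → Proc → Proc} {I X : Set A} {P Q : Proc}

theorem tr_tau_iff (hh : HideSpec Tr hideOp) :
    Tr (hideOp I P) .tau Q ↔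
      ∃ P', (Tr P .tau P' ∨ ∃ b ∈ I, Tr P (.vis b) P') ∧ Q = hideOp I P' := by
  rw [hh I P]
  grind

theorem tr_iff_of_ne_tau (hh : HideSpec Tr hideOp) {α : Act A} (hα : α ≠ .tau) :
    Tr (hideOp I P) α Q ↔
      (∀ a, α = .vis a → a ∉ I) ∧ ∃ P', Tr P α P' ∧ Q = hideOp I P' := by
  rw [hh I P]
  grind

theorem idle_iff (hh : HideSpec Tr hideOp) : Idle Tr (hideOp I P) X ↔ Idle Tr P (X ∪ I) := by
  simp only [Idle, hh.tr_tau_iff, hh.tr_iff_of_ne_tau (α := .vis _) (by simp)]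
  grind

end HideSpec

section ThetaHide

variable {theta : Set A → Proc → Proc} {hideOp : Set A → Proc → Proc}
  {X I : Set A} {P Q : Proc}

theorem theta_hide_tr_tau_iff (hθ : ThetaSpec Tr theta) (hh : HideSpec Tr hideOp) :
    Tr (theta X (hideOp I P)) .tau Q ↔
      ∃ P', (Tr P .tau P' ∨ ∃ b ∈ I, Tr P (.vis b) P') ∧ Q = theta X (hideOp I P') := by
  simp only [hθ.tr_tau_iff, hh.tr_tau_iff]
  grind

theorem theta_hide_tr_iff_of_ne_tau (hθ : ThetaSpec Tr theta) (hh : HideSpec Tr hideOp)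
    {α : Act A} (hα : α ≠ .tau) :
    Tr (theta X (hideOp I P)) α Q ↔
      ((∃ a ∈ X, α = .vis a) ∨ Idle Tr P (X ∪ I)) ∧ (∀ a, α = .vis a → a ∉ I) ∧
        ∃ P', Tr P α P' ∧ Q = hideOp I P' := by
  rw [hθ.tr_iff_of_ne_tau hα, hh.idle_iff, hh.tr_iff_of_ne_tau hα]

theorem theta_hide_theta_tr_tau_iff (hθ : ThetaSpec Tr theta) (hh : HideSpec Tr hideOp) :
    Tr (theta X (hideOp I (theta (X ∪ I) P))) .tau Q ↔
      ∃ P', Tr P .tau P' ∧ Q = theta X (hideOp I (theta (X ∪ I) P')) ∨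
        (∃ b ∈ I, Tr P (.vis b) P') ∧ Q = theta X (hideOp I P') := by
  have hidden (P' : Proc) :
      (∃ b ∈ I, Tr (theta (X ∪ I) P) (.vis b) P') ↔ ∃ b ∈ I, Tr P (.vis b) P' :=
    exists_congr fun _ ↦ and_congr_right fun hb ↦ hθ.tr_vis_iff_of_mem (Or.inr hb)
  simp only [theta_hide_tr_tau_iff hθ hh, hidden, hθ.tr_tau_iff]
  grind

theorem theta_hide_theta_tr_iff_of_ne_tau (hθ : ThetaSpec Tr theta) (hh : HideSpec Tr hideOp)
    {α : Act A} (hα : α ≠ .tau) :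
    Tr (theta X (hideOp I (theta (X ∪ I) P))) α Q ↔ Tr (theta X (hideOp I P)) α Q := by
  simp only [theta_hide_tr_iff_of_ne_tau hθ hh hα, hθ.idle_iff, hθ.tr_iff_of_ne_tau hα]
  grind

end ThetaHide

/-- `θ_X(τ_I(P)) ↔ θ_X(τ_I(θ_{X∪I}(P)))`. -/
theorem theta_hide (Tr : Proc → Act A → Proc → Prop)
    (theta : Set A → Proc → Proc) (hideOp : Set A → Proc → Proc)
    (hθ : ThetaSpec Tr theta) (hhide : HideSpec Tr hideOp)
    (P : Proc) (X I : Set A) :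
    SBisim Tr (theta X (hideOp I P)) (theta X (hideOp I (theta (X ∪ I) P))) := by
  refine SBisim.of_matching (fun p ↦ theta X (hideOp I p))
    (fun p ↦ theta X (hideOp I (theta (X ∪ I) p))) ?_ ?_ P
  · intro p α q hq
    by_cases hα : α = .tau
    · subst hα
      obtain ⟨p', hp' | hp', rfl⟩ := (theta_hide_tr_tau_iff hθ hhide).1 hq
      · exact ⟨_, (theta_hide_theta_tr_tau_iff hθ hhide).2 ⟨p', .inl ⟨hp', rfl⟩⟩,
          .inr ⟨p', rfl, rfl⟩⟩
      · exact ⟨_, (theta_hide_theta_tr_tau_iff hθ hhide).2 ⟨p', .inr ⟨hp', rfl⟩⟩, .inl rfl⟩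
    · exact ⟨q, (theta_hide_theta_tr_iff_of_ne_tau hθ hhide hα).2 hq, .inl rfl⟩
  · intro p α q hq
    by_cases hα : α = .tau
    · subst hα
      obtain ⟨p', ⟨hp', rfl⟩ | ⟨hp', rfl⟩⟩ := (theta_hide_theta_tr_tau_iff hθ hhide).1 hq
      · exact ⟨_, (theta_hide_tr_tau_iff hθ hhide).2 ⟨p', .inl hp', rfl⟩, .inr ⟨p', rfl, rfl⟩⟩
      · exact ⟨_, (theta_hide_tr_tau_iff hθ hhide).2 ⟨p', .inr hp', rfl⟩, .inl rfl⟩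
    · exact ⟨q, (theta_hide_theta_tr_iff_of_ne_tau hθ hhide hα).1 hq, .inl rfl⟩
end

section
/- For any process P, renaming relation ℜ ⊆ A × A and X ⊆ A, θ_X(ℜ(P)) is strongly bisimilar to θ_X(ℜ(θ_{ℜ⁻¹(X)}(P))), where ℜ⁻¹(X) = {a | ∃b∈X. (a,b)∈ℜ}. -/
variable {A : Type*} {Proc : Type*}

/-- Transitions of the CCSP relational renaming operator `ℜ( _ )` are exactly
those generated by its operational rule. -/
def RenSpec (Tr : Proc → Act A → Proc → Prop)
    (ren : Set (A × A) → Proc → Proc) : Prop :=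
  ∀ (R : Set (A × A)) (P : Proc) (β : Act A) (Q : Proc),
    Tr (ren R P) β Q ↔
      ∃ α P', Tr P α P' ∧ Q = ren R P' ∧
        ((α = Act.tau ∧ β = Act.tau) ∨ (α = Act.to ∧ β = Act.to) ∨
         (∃ a b, α = Act.vis a ∧ β = Act.vis b ∧ (a, b) ∈ R))

/-!
Both `θ_X(ℜ(·))` and `θ_X(ℜ(θ_{ℜ⁻¹(X)}(·)))` turn the `τ`-steps of their argument into
`τ`-steps, and their other steps coincide: `ℜ(P)` is idle on `X` exactly when `P` is idle on
`ℜ⁻¹(X)`, and a visible step of `ℜ(P)` into `X` comes from a step of `P` into `ℜ⁻¹(X)`, so the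
guard of the outer `θ_X` already restricts the steps of `P` as the inner `θ_{ℜ⁻¹(X)}` does.
Pairing the two contexts applied to the same process thus gives a strong bisimulation.
-/

def RenLabel (R : Set (A × A)) (α β : Act A) : Prop :=
  (α = Act.tau ∧ β = Act.tau) ∨ (α = Act.to ∧ β = Act.to) ∨
    (∃ a b, α = Act.vis a ∧ β = Act.vis b ∧ (a, b) ∈ R)

section

variable {R : Set (A × A)} {α : Act A}

lemma renLabel_tau_right_iff : RenLabel R α Act.tau ↔ α = Act.tau := by
  unfold RenLabel; aesop

lemma renLabel_vis_right_iff {a : A} :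
    RenLabel R α (Act.vis a) ↔ ∃ b, α = Act.vis b ∧ (b, a) ∈ R := by
  unfold RenLabel; aesop

lemma RenLabel.ne_tau {β : Act A} (h : RenLabel R α β) (hβ : β ≠ Act.tau) :
    α ≠ Act.tau := by
  unfold RenLabel at h; aesop

end

def LiftsTau (Tr : Proc → Act A → Proc → Prop) (F : Proc → Proc) : Prop :=
  ∀ P Q, Tr (F P) Act.tau Q ↔ ∃ P', Tr P Act.tau P' ∧ Q = F P'

section

variable {Tr : Proc → Act A → Proc → Prop}

lemma LiftsTau.comp {F G : Proc → Proc}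
    (hF : LiftsTau Tr F) (hG : LiftsTau Tr G) : LiftsTau Tr (F ∘ G) := by
  intro P Q
  simp only [Function.comp_apply, hF _ Q, hG P]
  aesop

lemma sbisim_of_liftsTau {F G : Proc → Proc}
    (hF : LiftsTau Tr F) (hG : LiftsTau Tr G)
    (hvis : ∀ P α Q, α ≠ Act.tau → (Tr (F P) α Q ↔ Tr (G P) α Q)) (P : Proc) :
    SBisim Tr (F P) (G P) := by
  refine ⟨fun U V => (∃ P, U = F P ∧ V = G P) ∨ (∃ P, U = G P ∧ V = F P) ∨ U = V,
    ⟨?symm, ?step⟩, .inl ⟨P, rfl, rfl⟩⟩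
  case symm =>
    rintro U V (⟨P, rfl, rfl⟩ | ⟨P, rfl, rfl⟩ | rfl)
    exacts [.inr (.inl ⟨P, rfl, rfl⟩), .inl ⟨P, rfl, rfl⟩, .inr (.inr rfl)]
  case step =>
    rintro U V α U' (⟨P, rfl, rfl⟩ | ⟨P, rfl, rfl⟩ | rfl) hU'
    · by_cases hα : α = Act.tau
      · subst hα
        obtain ⟨P', hP', rfl⟩ := (hF P U').1 hU'
        exact ⟨G P', (hG P _).2 ⟨P', hP', rfl⟩, .inl ⟨P', rfl, rfl⟩⟩
      · exact ⟨U', (hvis P α U' hα).1 hU', .inr (.inr rfl)⟩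
    · by_cases hα : α = Act.tau
      · subst hα
        obtain ⟨P', hP', rfl⟩ := (hG P U').1 hU'
        exact ⟨F P', (hF P _).2 ⟨P', hP', rfl⟩, .inr (.inl ⟨P', rfl, rfl⟩)⟩
      · exact ⟨U', (hvis P α U' hα).2 hU', .inr (.inr rfl)⟩
    · exact ⟨U', hU', .inr (.inr rfl)⟩

end

section

variable {Tr : Proc → Act A → Proc → Prop} {theta : Set A → Proc → Proc}
  {ren : Set (A × A) → Proc → Proc} {R : Set (A × A)} {X : Set A} {P Q : Proc}
  {α : Act A}

lemma tr_theta_tau_iff (hθ : ThetaSpec Tr theta) :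
    Tr (theta X P) Act.tau Q ↔ ∃ P', Tr P Act.tau P' ∧ Q = theta X P' := by
  rw [hθ]; aesop

lemma tr_theta_iff_of_ne_tau (hθ : ThetaSpec Tr theta) (hα : α ≠ Act.tau) :
    Tr (theta X P) α Q ↔ Tr P α Q ∧ (Idle Tr P X ∨ ∃ a ∈ X, α = Act.vis a) := by
  rw [hθ]; aesop

lemma tr_theta_vis_iff_of_mem (hθ : ThetaSpec Tr theta) {a : A} (ha : a ∈ X) :
    Tr (theta X P) (Act.vis a) Q ↔ Tr P (Act.vis a) Q := by
  rw [tr_theta_iff_of_ne_tau hθ (α := Act.vis a) nofun]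
  exact and_iff_left (.inr ⟨a, ha, rfl⟩)

lemma idle_theta_iff (hθ : ThetaSpec Tr theta) :
    Idle Tr (theta X P) X ↔ Idle Tr P X := by
  refine and_congr (forall₂_congr fun a ha => ?_) ?_
  · simp only [tr_theta_vis_iff_of_mem hθ ha]
  · simp only [tr_theta_tau_iff hθ]; aesop

lemma tr_ren_iff (hren : RenSpec Tr ren) :
    Tr (ren R P) α Q ↔ ∃ β P', Tr P β P' ∧ Q = ren R P' ∧ RenLabel R β α :=
  hren R P α Q

lemma tr_ren_tau_iff (hren : RenSpec Tr ren) :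
    Tr (ren R P) Act.tau Q ↔ ∃ P', Tr P Act.tau P' ∧ Q = ren R P' := by
  simp only [tr_ren_iff hren, renLabel_tau_right_iff]
  aesop

lemma tr_ren_vis_iff (hren : RenSpec Tr ren) {a : A} :
    Tr (ren R P) (Act.vis a) Q ↔
      ∃ b P', Tr P (Act.vis b) P' ∧ Q = ren R P' ∧ (b, a) ∈ R := by
  simp only [tr_ren_iff hren, renLabel_vis_right_iff]
  aesop

lemma tr_ren_congr (hren : RenSpec Tr ren) {P₂ : Proc}
    (h : ∀ β P', RenLabel R β α → (Tr P β P' ↔ Tr P₂ β P')) :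
    Tr (ren R P) α Q ↔ Tr (ren R P₂) α Q := by
  simp only [tr_ren_iff hren]
  exact exists_congr fun β => exists_congr fun P' =>
    ⟨fun ⟨hP, hQ, hl⟩ => ⟨(h β P' hl).1 hP, hQ, hl⟩,
      fun ⟨hP, hQ, hl⟩ => ⟨(h β P' hl).2 hP, hQ, hl⟩⟩

lemma idle_ren_iff (hren : RenSpec Tr ren) :
    Idle Tr (ren R P) X ↔ Idle Tr P (SetRel.preimage R X) := by
  simp only [Idle, tr_ren_tau_iff hren, tr_ren_vis_iff hren, SetRel.mem_preimage]
  aesop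

lemma liftsTau_theta (hθ : ThetaSpec Tr theta) (X : Set A) : LiftsTau Tr (theta X) :=
  fun _ _ => tr_theta_tau_iff hθ

lemma liftsTau_ren (hren : RenSpec Tr ren) (R : Set (A × A)) : LiftsTau Tr (ren R) :=
  fun _ _ => tr_ren_tau_iff hren

lemma tr_theta_ren_theta_preimage_iff (hθ : ThetaSpec Tr theta) (hren : RenSpec Tr ren)
    (hα : α ≠ Act.tau) :
    Tr (theta X (ren R P)) α Q ↔
      Tr (theta X (ren R (theta (SetRel.preimage R X) P))) α Q := by
  have hidle : Idle Tr (ren R (theta (SetRel.preimage R X) P)) X ↔ Idle Tr (ren R P) X := by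
    rw [idle_ren_iff hren, idle_ren_iff hren, idle_theta_iff hθ]
  rw [tr_theta_iff_of_ne_tau hθ hα, tr_theta_iff_of_ne_tau hθ hα, hidle]
  refine and_congr_left fun hguard => tr_ren_congr hren fun β P' hβ => ?_
  rw [tr_theta_iff_of_ne_tau hθ (hβ.ne_tau hα)]
  refine (and_iff_left ?_).symm
  rcases hguard with hI | ⟨a, ha, rfl⟩
  · exact .inl ((idle_ren_iff hren).1 hI)
  · obtain ⟨b, rfl, hba⟩ := renLabel_vis_right_iff.1 hβ
    exact .inr ⟨b, ⟨a, ha, hba⟩, rfl⟩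

end

/-- `θ_X(ℜ(P)) ↔ θ_X(ℜ(θ_{ℜ⁻¹(X)}(P)))`, where `ℜ⁻¹(X) = {a | ∃b∈X. (a,b)∈ℜ}`. -/
theorem theta_ren (Tr : Proc → Act A → Proc → Prop)
    (theta : Set A → Proc → Proc) (ren : Set (A × A) → Proc → Proc)
    (hθ : ThetaSpec Tr theta) (hren : RenSpec Tr ren)
    (P : Proc) (R : Set (A × A)) (X : Set A) :
    SBisim Tr (theta X (ren R P))
      (theta X (ren R (theta {a | ∃ b ∈ X, (a, b) ∈ R} P))) :=
  sbisim_of_liftsTau (F := theta X ∘ ren R)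
    (G := theta X ∘ ren R ∘ theta (SetRel.preimage R X))
    ((liftsTau_theta hθ X).comp (liftsTau_ren hren R))
    (((liftsTau_theta hθ X).comp (liftsTau_ren hren R)).comp (liftsTau_theta hθ _))
    (fun _ _ _ hα => tr_theta_ren_theta_preimage_iff hθ hren hα) P
end

section
/- If P B Q for some strong time-out bisimulation up to strong bisimilarity B, then P ↔ᵣ Q. -/
variable {A : Type*} {Proc : Type*}

/-- A strong time-out bisimulation up to strong bisimilarity `↔`. -/
def IsSTBUpToSB (Tr : Proc → Act A → Proc → Prop) (theta : Set A → Proc → Proc)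
    (B : Proc → Proc → Prop) : Prop :=
  (∀ P Q, B P Q → B Q P) ∧
  (∀ P Q (α : Act A) P', B P Q → α ≠ Act.to → Tr P α P' →
      ∃ Q', Tr Q α Q' ∧ ∃ R T, SBisim Tr P' R ∧ B R T ∧ SBisim Tr T Q') ∧
  (∀ P Q (X : Set A) P', B P Q → Idle Tr P X → Tr P Act.to P' →
      ∃ Q', Tr Q Act.to Q' ∧
        ∃ R T, SBisim Tr (theta X P') R ∧ B R T ∧ SBisim Tr T (theta X Q'))

/-- If `P B Q` for some strong time-out bisimulation up to strong bisimilarity,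
then `P ↔ᵣ Q`. -/
theorem upto_sb (Tr : Proc → Act A → Proc → Prop) (theta : Set A → Proc → Proc)
    (hθ : ThetaSpec Tr theta)
    (hcong : ∀ (X : Set A) (P Q : Proc), SBisim Tr P Q →
      SBisim Tr (theta X P) (theta X Q))
    (B : Proc → Proc → Prop) (hB : IsSTBUpToSB Tr theta B)
    (P Q : Proc) (h : B P Q) :
    RBisimT Tr theta P Q := by
  have refl : ∀ P : Proc, SBisim Tr P P := fun P =>
    ⟨Eq, ⟨fun _ _ h => h.symm, fun P Q α P' h hT => ⟨P', h ▸ hT, rfl⟩⟩, rfl⟩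
  have symm : ∀ P Q : Proc, SBisim Tr P Q → SBisim Tr Q P := by
    rintro P Q ⟨S, hS, hPQ⟩; exact ⟨S, hS, hS.1 _ _ hPQ⟩
  have step : ∀ P Q (α : Act A) P', SBisim Tr P Q → Tr P α P' →
      ∃ Q', Tr Q α Q' ∧ SBisim Tr P' Q' := by
    rintro P Q α P' ⟨S, hS, hPQ⟩ hT
    obtain ⟨Q', hQ', hS'⟩ := hS.2 P Q α P' hPQ hT
    exact ⟨Q', hQ', S, hS, hS'⟩
  have trans : ∀ P Q R : Proc, SBisim Tr P Q → SBisim Tr Q R → SBisim Tr P R := by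
    intro P Q R h1 h2
    refine ⟨fun P R => ∃ Q, SBisim Tr P Q ∧ SBisim Tr Q R, ⟨?_, ?_⟩, Q, h1, h2⟩
    · rintro P R ⟨Q, h1, h2⟩; exact ⟨Q, symm _ _ h2, symm _ _ h1⟩
    · rintro P R α P' ⟨Q, h1, h2⟩ hT
      obtain ⟨Q', hQ', h1'⟩ := step _ _ _ _ h1 hT
      obtain ⟨R', hR', h2'⟩ := step _ _ _ _ h2 hQ'
      exact ⟨R', hR', Q', h1', h2'⟩
  have idle : ∀ (P Q : Proc) (X : Set A), SBisim Tr P Q → Idle Tr P X → Idle Tr Q X := by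
    intro P Q X h hI
    constructor
    · intro a ha Q' hQ'
      obtain ⟨P', hP', _⟩ := step _ _ _ _ (symm _ _ h) hQ'
      exact hI.1 a ha P' hP'
    · intro Q' hQ'
      obtain ⟨P', hP', _⟩ := step _ _ _ _ (symm _ _ h) hQ'
      exact hI.2 P' hP'
  refine ⟨fun P Q => ∃ R T, SBisim Tr P R ∧ B R T ∧ SBisim Tr T Q,
    ⟨?_, ?_, ?_⟩, P, Q, refl P, h, refl Q⟩
  · rintro P Q ⟨R, T, h1, h2, h3⟩
    exact ⟨T, R, symm _ _ h3, hB.1 _ _ h2, symm _ _ h1⟩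
  · rintro P Q α P' ⟨R, T, h1, h2, h3⟩ hα hT
    obtain ⟨R', hR', h1'⟩ := step _ _ _ _ h1 hT
    obtain ⟨T', hT', R₂, T₂, hR₂, hB₂, hT₂⟩ := hB.2.1 R T α R' h2 hα hR'
    obtain ⟨Q', hQ', h3'⟩ := step _ _ _ _ h3 hT'
    exact ⟨Q', hQ', R₂, T₂, trans _ _ _ h1' hR₂, hB₂, trans _ _ _ hT₂ h3'⟩
  · rintro P Q X P' ⟨R, T, h1, h2, h3⟩ hI hT
    obtain ⟨R', hR', h1'⟩ := step _ _ _ _ h1 hT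
    have hIR : Idle Tr R X := idle _ _ _ h1 hI
    obtain ⟨T', hT', R₂, T₂, hR₂, hB₂, hT₂⟩ := hB.2.2 R T X R' h2 hIR hR'
    obtain ⟨Q', hQ', h3'⟩ := step _ _ _ _ h3 hT'
    refine ⟨Q', hQ', R₂, T₂, trans _ _ _ (hcong X _ _ h1') hR₂, hB₂,
      trans _ _ _ hT₂ (hcong X _ _ h3')⟩
end

section
/- If P B Q for some strong time-out bisimulation up to reflexivity and transitivity B, then P ↔ᵣ Q. -/
variable {A : Type*} {Proc : Type*}

/-- A strong time-out bisimulation up to reflexivity and transitivity. -/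
def IsSTBUpToRT (Tr : Proc → Act A → Proc → Prop) (theta : Set A → Proc → Proc)
    (B : Proc → Proc → Prop) : Prop :=
  (∀ P Q, B P Q → B Q P) ∧
  (∀ P Q (α : Act A) P', B P Q → α ≠ Act.to → Tr P α P' →
      ∃ Q', Tr Q α Q' ∧ Relation.ReflTransGen B P' Q') ∧
  (∀ P Q (X : Set A) P', B P Q → Idle Tr P X → Tr P Act.to P' →
      ∃ Q', Tr Q Act.to Q' ∧
        Relation.ReflTransGen B (theta X P') (theta X Q'))

/-- If `P B Q` for some strong time-out bisimulation up to reflexivity and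
transitivity, then `P ↔ᵣ Q`. -/
theorem upto_refl_trans (Tr : Proc → Act A → Proc → Prop)
    (theta : Set A → Proc → Proc) (hθ : ThetaSpec Tr theta)
    (B : Proc → Proc → Prop) (hB : IsSTBUpToRT Tr theta B)
    (P Q : Proc) (h : B P Q) :
    RBisimT Tr theta P Q := by
  obtain ⟨hsym, hstep, hto⟩ := hB
  -- Idle transfers along B
  have idleB : ∀ P Q (X : Set A), B P Q → Idle Tr P X → Idle Tr Q X := by
    intro P Q X hb ⟨hvis, htau⟩
    constructor
    · intro a ha Q' htr
      obtain ⟨P', hP', _⟩ := hstep Q P (Act.vis a) Q' (hsym _ _ hb) (by simp) htr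
      exact hvis a ha P' hP'
    · intro Q' htr
      obtain ⟨P', hP', _⟩ := hstep Q P Act.tau Q' (hsym _ _ hb) (by simp) htr
      exact htau P' hP'
  have idleC : ∀ P Q (X : Set A), Relation.ReflTransGen B P Q → Idle Tr P X →
      Idle Tr Q X := by
    intro P Q X hc
    induction hc with
    | refl => exact id
    | tail _ hb ih => exact fun h => idleB _ _ _ hb (ih h)
  refine ⟨Relation.ReflTransGen B, ⟨?_, ?_, ?_⟩, Relation.ReflTransGen.single h⟩
  · intro P Q hc
    induction hc with
    | refl => exact .refl
    | tail _ hb ih => exact .trans (.single (hsym _ _ hb)) ih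
  · intro P Q α P' hc hα htr
    induction hc with
    | refl => exact ⟨P', htr, .refl⟩
    | tail _ hb ih =>
      obtain ⟨Q₁', hQ₁', hc₁⟩ := ih
      obtain ⟨Q', hQ', hc₂⟩ := hstep _ _ _ _ hb hα hQ₁'
      exact ⟨Q', hQ', hc₁.trans hc₂⟩
  · intro P Q X P' hc hidle htr
    induction hc with
    | refl => exact ⟨P', htr, .refl⟩
    | @tail Q₁ Q hc₁ hb ih =>
      obtain ⟨Q₁', hQ₁', hr₁⟩ := ih
      obtain ⟨Q', hQ', hr₂⟩ := hto Q₁ Q X Q₁' hb (idleC _ _ _ hc₁ hidle) hQ₁'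
      exact ⟨Q', hQ', hr₁.trans hr₂⟩
end

section
/- θ_K^V(θ_L^U(P)) is strongly bisimilar to θ_{K∪L}^{V∩U}(P), provided (K∪L) ⊆ (V∩U) and either U=V, or K=L, or K⊆L⊆U⊆V, or L⊆K⊆V⊆U. -/
variable {A : Type*} {Proc : Type*}

/-- Transitions of the operator `θ_L^U` (for `L ⊆ U ⊆ A`) are exactly those
generated by its three operational rules. -/
def ThetaLUSpec (Tr : Proc → Act A → Proc → Prop)
    (thetaLU : Set A → Set A → Proc → Proc) : Prop :=
  ∀ (L U : Set A) (P : Proc) (α : Act A) (Q : Proc),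
    Tr (thetaLU L U P) α Q ↔
      ((α = Act.tau ∧ ∃ P', Tr P Act.tau P' ∧ Q = thetaLU L U P') ∨
       (∃ a, α = Act.vis a ∧ a ∈ U ∧ Tr P α Q) ∨
       (α ≠ Act.tau ∧ Idle Tr P L ∧ Tr P α Q))


lemma idle_mono {Tr : Proc → Act A → Proc → Prop} {Q : Proc} {X Y : Set A}
    (hXY : X ⊆ Y) (hI : Idle Tr Q Y) : Idle Tr Q X :=
  ⟨fun a ha => hI.1 a (hXY ha), hI.2⟩

lemma idle_union {Tr : Proc → Act A → Proc → Prop} {Q : Proc} {X Y : Set A} :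
    Idle Tr Q (X ∪ Y) ↔ Idle Tr Q X ∧ Idle Tr Q Y := by
  constructor
  · intro hI
    exact ⟨idle_mono Set.subset_union_left hI, idle_mono Set.subset_union_right hI⟩
  · rintro ⟨⟨h1, h2⟩, ⟨h3, _⟩⟩
    refine ⟨fun a ha => ?_, h2⟩
    rcases ha with ha | ha
    · exact h1 a ha
    · exact h3 a ha

lemma idle_theta {Tr : Proc → Act A → Proc → Prop}
    {thetaLU : Set A → Set A → Proc → Proc} (h : ThetaLUSpec Tr thetaLU)
    {L U K : Set A} {Q : Proc} (hKU : K ⊆ U) :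
    Idle Tr (thetaLU L U Q) K ↔ Idle Tr Q K := by
  constructor
  · rintro ⟨h1, h2⟩
    refine ⟨fun a ha P' hTr => h1 a ha P' ?_, fun P' hTr => h2 (thetaLU L U P') ?_⟩
    · exact (h L U Q _ P').mpr (Or.inr (Or.inl ⟨a, rfl, hKU ha, hTr⟩))
    · exact (h L U Q _ _).mpr (Or.inl ⟨rfl, P', hTr, rfl⟩)
  · rintro ⟨h1, h2⟩
    constructor
    · intro a ha P' hTr
      rcases (h L U Q _ P').mp hTr with ⟨heq, _⟩ | ⟨b, hb, _, hT⟩ | ⟨_, _, hT⟩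
      · cases heq
      · exact h1 a ha P' hT
      · exact h1 a ha P' hT
    · intro P' hTr
      rcases (h L U Q _ P').mp hTr with ⟨_, Q', hT, _⟩ | ⟨b, hb, _⟩ | ⟨hne, _⟩
      · exact h2 Q' hT
      · cases hb
      · exact absurd rfl hne

/-- `θ_K^V(θ_L^U(P)) ↔ θ_{K∪L}^{V∩U}(P)`, provided `(K∪L) ⊆ (V∩U)` and either
`U=V`, or `K=L`, or `K⊆L⊆U⊆V`, or `L⊆K⊆V⊆U`. -/
theorem thetaLU_collapse (Tr : Proc → Act A → Proc → Prop)
    (thetaLU : Set A → Set A → Proc → Proc) (h : ThetaLUSpec Tr thetaLU)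
    (K V L U : Set A) (P : Proc)
    (hsub : K ∪ L ⊆ V ∩ U)
    (hside : U = V ∨ K = L ∨ (K ⊆ L ∧ L ⊆ U ∧ U ⊆ V) ∨ (L ⊆ K ∧ K ⊆ V ∧ V ⊆ U)) :
    SBisim Tr (thetaLU K V (thetaLU L U P)) (thetaLU (K ∪ L) (V ∩ U) P) := by
  have hK : K ⊆ V ∩ U := Set.subset_union_left.trans hsub
  have hL : L ⊆ V ∩ U := Set.subset_union_right.trans hsub
  have hKV : K ⊆ V := fun a ha => (hK ha).1
  have hKU : K ⊆ U := fun a ha => (hK ha).2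
  have hLV : L ⊆ V := fun a ha => (hL ha).1
  have hLU : L ⊆ U := fun a ha => (hL ha).2
  have hA : V ⊆ U ∨ K ⊆ L := by
    rcases hside with h1 | h1 | ⟨h1, h2, h3⟩ | ⟨h1, h2, h3⟩
    · exact Or.inl (h1 ▸ subset_rfl)
    · exact Or.inr (h1 ▸ subset_rfl)
    · exact Or.inr h1
    · exact Or.inl h3
  have hB : U ⊆ V ∨ L ⊆ K := by
    rcases hside with h1 | h1 | ⟨h1, h2, h3⟩ | ⟨h1, h2, h3⟩
    · exact Or.inl (h1 ▸ subset_rfl)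
    · exact Or.inr (h1 ▸ subset_rfl)
    · exact Or.inl h3
    · exact Or.inr h1
  refine ⟨fun R S =>
      (∃ Q, R = thetaLU K V (thetaLU L U Q) ∧ S = thetaLU (K ∪ L) (V ∩ U) Q) ∨
      (∃ Q, S = thetaLU K V (thetaLU L U Q) ∧ R = thetaLU (K ∪ L) (V ∩ U) Q) ∨
      R = S,
    ⟨?_, ?_⟩, Or.inl ⟨P, rfl, rfl⟩⟩
  · rintro R S (⟨Q, h1, h2⟩ | ⟨Q, h1, h2⟩ | h1)
    · exact Or.inr (Or.inl ⟨Q, h1, h2⟩)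
    · exact Or.inl ⟨Q, h1, h2⟩
    · exact Or.inr (Or.inr h1.symm)
  · rintro R S α P' (⟨Q, rfl, rfl⟩ | ⟨Q, rfl, rfl⟩ | rfl) hTr
    · -- forward: R = θKV (θLU Q), S = θ(K∪L)(V∩U) Q
      rcases (h K V _ α P').mp hTr with
          ⟨rfl, R', hT, rfl⟩ | ⟨a, rfl, haV, hT⟩ | ⟨hne, hIdle, hT⟩
      · -- tau rule
        rcases (h L U Q _ R').mp hT with ⟨_, Q', hQ, rfl⟩ | ⟨b, hb, _⟩ | ⟨hne, _⟩
        · exact ⟨thetaLU (K ∪ L) (V ∩ U) Q',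
            (h _ _ Q _ _).mpr (Or.inl ⟨rfl, Q', hQ, rfl⟩),
            Or.inl ⟨Q', rfl, rfl⟩⟩
        · cases hb
        · exact absurd rfl hne
      · -- visible a ∈ V
        rcases (h L U Q _ P').mp hT with ⟨heq, _⟩ | ⟨b, hb, hbU, hQ⟩ | ⟨_, hQL, hQ⟩
        · cases heq
        · obtain rfl : a = b := Act.vis.inj hb
          exact ⟨P', (h _ _ Q _ _).mpr (Or.inr (Or.inl ⟨a, rfl, ⟨haV, hbU⟩, hQ⟩)),
            Or.inr (Or.inr rfl)⟩
        · rcases hA with hVU | hKL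
          · exact ⟨P', (h _ _ Q _ _).mpr (Or.inr (Or.inl ⟨a, rfl, ⟨haV, hVU haV⟩, hQ⟩)),
              Or.inr (Or.inr rfl)⟩
          · exact ⟨P', (h _ _ Q _ _).mpr (Or.inr (Or.inr ⟨by simp,
              idle_union.mpr ⟨idle_mono hKL hQL, hQL⟩, hQ⟩)), Or.inr (Or.inr rfl)⟩
      · -- rule 3
        have hQK : Idle Tr Q K := (idle_theta h hKU).mp hIdle
        rcases (h L U Q _ P').mp hT with ⟨heq, _⟩ | ⟨b, rfl, hbU, hQ⟩ | ⟨_, hQL, hQ⟩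
        · exact absurd heq hne
        · rcases hB with hUV | hLK
          · exact ⟨P', (h _ _ Q _ _).mpr (Or.inr (Or.inl ⟨b, rfl, ⟨hUV hbU, hbU⟩, hQ⟩)),
              Or.inr (Or.inr rfl)⟩
          · exact ⟨P', (h _ _ Q _ _).mpr (Or.inr (Or.inr ⟨by simp,
              idle_union.mpr ⟨hQK, idle_mono hLK hQK⟩, hQ⟩)), Or.inr (Or.inr rfl)⟩
        · exact ⟨P', (h _ _ Q _ _).mpr (Or.inr (Or.inr ⟨hne,
            idle_union.mpr ⟨hQK, hQL⟩, hQ⟩)), Or.inr (Or.inr rfl)⟩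
    · -- backward: R = θ(K∪L)(V∩U) Q, S = θKV (θLU Q)
      rcases (h (K ∪ L) (V ∩ U) Q α P').mp hTr with
          ⟨rfl, Q', hQ, rfl⟩ | ⟨a, rfl, haVU, hQ⟩ | ⟨hne, hIdle, hQ⟩
      · exact ⟨thetaLU K V (thetaLU L U Q'),
          (h _ _ _ _ _).mpr (Or.inl ⟨rfl, thetaLU L U Q',
            (h _ _ Q _ _).mpr (Or.inl ⟨rfl, Q', hQ, rfl⟩), rfl⟩),
          Or.inr (Or.inl ⟨Q', rfl, rfl⟩)⟩
      · exact ⟨P', (h _ _ _ _ _).mpr (Or.inr (Or.inl ⟨a, rfl, haVU.1,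
          (h L U Q _ _).mpr (Or.inr (Or.inl ⟨a, rfl, haVU.2, hQ⟩))⟩)),
          Or.inr (Or.inr rfl)⟩
      · obtain ⟨hQK, hQL⟩ := idle_union.mp hIdle
        exact ⟨P', (h _ _ _ _ _).mpr (Or.inr (Or.inr ⟨hne,
            (idle_theta h hKU).mpr hQK,
            (h L U Q _ _).mpr (Or.inr (Or.inr ⟨hne, hQL, hQ⟩))⟩)),
          Or.inr (Or.inr rfl)⟩
    · exact ⟨P', hTr, Or.inr (Or.inr rfl)⟩
end

section
/- If ψ_X(P) ↔ᵣ ψ_X(Q) for all X ⊆ A, then P ↔ᵣ Q (soundness of the reactive approximation axiom). -/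
variable {A : Type*} {Proc : Type*}

/-- Transitions of the operator `ψ_X` are exactly those generated by its two
operational rules. -/
def PsiSpec (Tr : Proc → Act A → Proc → Prop) (theta : Set A → Proc → Proc)
    (psi : Set A → Proc → Proc) : Prop :=
  ∀ (X : Set A) (P : Proc) (α : Act A) (Q : Proc),
    Tr (psi X P) α Q ↔
      (α ≠ Act.to ∧ Tr P α Q) ∨
      (α = Act.to ∧ Idle Tr P X ∧ ∃ P', Tr P Act.to P' ∧ Q = theta X P')

/-! The relation `{(P, Q) | ∀ X, ψ_X(P) ↔ᵣ ψ_X(Q)}` is a strong time-out bisimulation up to `↔ᵣ`.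
Moves other than time-outs are transferred through `ψ_∅`, which has the same such moves as its
argument. A time-out `P →t P'` allowed in environment `X` is a time-out `ψ_X(P) →t θ_X(P')`, so it is
matched by some `ψ_X(Q) →t θ_X(Q')` with `θ_X(θ_X(P')) ↔ᵣ θ_X(θ_X(Q'))`; since `θ_X ∘ θ_X` is
strongly bisimilar to `θ_X`, and strong bisimilarity is contained in the transitive relation `↔ᵣ`,
this gives `θ_X(P') ↔ᵣ θ_X(Q')`. -/

section Bisimilarity

variable {Tr : Proc → Act A → Proc → Prop} {theta : Set A → Proc → Proc}
  {psi : Set A → Proc → Proc}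

theorem Idle.of_initials_subset {P Q : Proc} {X : Set A} (hP : Idle Tr P X)
    (hQP : ∀ α Q', α ≠ Act.to → Tr Q α Q' → ∃ P', Tr P α P') : Idle Tr Q X := by
  refine ⟨fun a ha Q' hQ => ?_, fun Q' hQ => ?_⟩
  · obtain ⟨P', hP'⟩ := hQP (Act.vis a) Q' nofun hQ
    exact hP.1 a ha P' hP'
  · obtain ⟨P', hP'⟩ := hQP Act.tau Q' nofun hQ
    exact hP.2 P' hP'

theorem Idle.to_theta (hθ : ThetaSpec Tr theta) (Y : Set A) {P : Proc} {X : Set A}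
    (h : Idle Tr P X) : Idle Tr (theta Y P) X :=
  h.of_initials_subset fun _ _ _ hQ => by
    rcases (hθ _ _ _ _).1 hQ with ⟨rfl, P', hP, -⟩ | ⟨-, -, -, hP⟩ | ⟨-, -, hP⟩ <;> exact ⟨_, hP⟩

theorem theta_tr_tau_iff (hθ : ThetaSpec Tr theta) {X : Set A} {P Q : Proc} :
    Tr (theta X P) Act.tau Q ↔ ∃ P', Tr P Act.tau P' ∧ Q = theta X P' := by
  rw [hθ]
  constructor
  · rintro (⟨-, h⟩ | ⟨a, ha, -⟩ | ⟨hτ, -⟩)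
    · exact h
    · exact nomatch ha
    · exact absurd rfl hτ
  · exact fun h => Or.inl ⟨rfl, h⟩

theorem psi_tr_iff_of_ne_to (hψ : PsiSpec Tr theta psi) {X : Set A} {P Q : Proc} {α : Act A}
    (hα : α ≠ Act.to) : Tr (psi X P) α Q ↔ Tr P α Q := by
  rw [hψ]
  constructor
  · rintro (⟨-, h⟩ | ⟨h, -⟩)
    exacts [h, absurd h hα]
  · exact fun h => Or.inl ⟨hα, h⟩

theorem psi_tr_to_iff (hψ : PsiSpec Tr theta psi) {X : Set A} {P Q : Proc} :
    Tr (psi X P) Act.to Q ↔ Idle Tr P X ∧ ∃ P', Tr P Act.to P' ∧ Q = theta X P' := by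
  rw [hψ]
  constructor
  · rintro (⟨h, -⟩ | ⟨-, h⟩)
    exacts [absurd rfl h, h]
  · exact fun h => Or.inr ⟨rfl, h⟩

theorem Idle.to_psi (hψ : PsiSpec Tr theta psi) (Y : Set A) {P : Proc} {X : Set A}
    (h : Idle Tr P X) : Idle Tr (psi Y P) X :=
  h.of_initials_subset fun _ Q' hα hQ => ⟨Q', (psi_tr_iff_of_ne_to hψ hα).1 hQ⟩

variable (Tr) in
theorem isSB_sbisim : IsSB Tr (SBisim Tr) := by
  constructor
  · rintro P Q ⟨B, hB, hPQ⟩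
    exact ⟨B, hB, hB.1 P Q hPQ⟩
  · rintro P Q α P' ⟨B, hB, hPQ⟩ hP
    obtain ⟨Q', hQ, hPQ'⟩ := hB.2 P Q α P' hPQ hP
    exact ⟨Q', hQ, B, hB, hPQ'⟩

theorem SBisim.symm {P Q : Proc} (h : SBisim Tr P Q) : SBisim Tr Q P :=
  (isSB_sbisim Tr).1 P Q h

theorem SBisim.of_steps (B : Proc → Proc → Prop) (hsymm : ∀ P Q, B P Q → B Q P)
    (hstep : ∀ P Q α P', B P Q → Tr P α P' → ∃ Q', Tr Q α Q' ∧ (B P' Q' ∨ SBisim Tr P' Q'))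
    {P Q : Proc} (h : B P Q) : SBisim Tr P Q := by
  refine ⟨fun P Q => B P Q ∨ SBisim Tr P Q, ⟨?_, ?_⟩, Or.inl h⟩
  · rintro P Q (hPQ | hPQ)
    exacts [Or.inl (hsymm P Q hPQ), Or.inr hPQ.symm]
  · rintro P Q α P' (hPQ | hPQ) hP
    · exact hstep P Q α P' hPQ hP
    · obtain ⟨Q', hQ, hPQ'⟩ := (isSB_sbisim Tr).2 P Q α P' hPQ hP
      exact ⟨Q', hQ, Or.inr hPQ'⟩

theorem SBisim.refl (P : Proc) : SBisim Tr P P :=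
  SBisim.of_steps Eq (fun _ _ => Eq.symm)
    (fun _ _ _ P' hPQ hP => ⟨P', hPQ ▸ hP, Or.inl rfl⟩) rfl

theorem SBisim.idle {P Q : Proc} {X : Set A} (h : SBisim Tr P Q) (hP : Idle Tr P X) :
    Idle Tr Q X :=
  hP.of_initials_subset fun α Q' _ hQ =>
    let ⟨P', hP', _⟩ := (isSB_sbisim Tr).2 Q P α Q' h.symm hQ
    ⟨P', hP'⟩

theorem SBisim.theta_congr (hθ : ThetaSpec Tr theta) (X : Set A) {P Q : Proc} (h : SBisim Tr P Q) :
    SBisim Tr (theta X P) (theta X Q) := by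
  refine SBisim.of_steps (fun x y => ∃ Y P Q, SBisim Tr P Q ∧ x = theta Y P ∧ y = theta Y Q)
    ?_ ?_ ⟨X, P, Q, h, rfl, rfl⟩
  · rintro _ _ ⟨Y, P, Q, hPQ, rfl, rfl⟩
    exact ⟨Y, Q, P, hPQ.symm, rfl, rfl⟩
  · rintro _ _ α x' ⟨Y, P, Q, hPQ, rfl, rfl⟩ hx
    rcases (hθ _ _ _ _).1 hx with ⟨rfl, P', hP, rfl⟩ | ⟨a, rfl, haY, hP⟩ | ⟨hα, hidle, hP⟩
    · obtain ⟨Q', hQ, hPQ'⟩ := (isSB_sbisim Tr).2 P Q _ P' hPQ hP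
      exact ⟨theta Y Q', (theta_tr_tau_iff hθ).2 ⟨Q', hQ, rfl⟩,
        Or.inl ⟨Y, P', Q', hPQ', rfl, rfl⟩⟩
    · obtain ⟨Q', hQ, hPQ'⟩ := (isSB_sbisim Tr).2 P Q _ x' hPQ hP
      exact ⟨Q', (hθ _ _ _ _).2 (Or.inr (Or.inl ⟨a, rfl, haY, hQ⟩)), Or.inr hPQ'⟩
    · obtain ⟨Q', hQ, hPQ'⟩ := (isSB_sbisim Tr).2 P Q α x' hPQ hP
      exact ⟨Q', (hθ _ _ _ _).2 (Or.inr (Or.inr ⟨hα, hPQ.idle hidle, hQ⟩)), Or.inr hPQ'⟩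

theorem sbisim_theta_theta (hθ : ThetaSpec Tr theta) (X : Set A) (P : Proc) :
    SBisim Tr (theta X (theta X P)) (theta X P) := by
  refine SBisim.of_steps (fun x y => ∃ Y R, (x = theta Y (theta Y R) ∧ y = theta Y R) ∨
      (x = theta Y R ∧ y = theta Y (theta Y R))) ?_ ?_ ⟨X, P, Or.inl ⟨rfl, rfl⟩⟩
  · rintro _ _ ⟨Y, R, ⟨rfl, rfl⟩ | ⟨rfl, rfl⟩⟩
    exacts [⟨Y, R, Or.inr ⟨rfl, rfl⟩⟩, ⟨Y, R, Or.inl ⟨rfl, rfl⟩⟩]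
  · rintro _ _ α x' ⟨Y, R, ⟨rfl, rfl⟩ | ⟨rfl, rfl⟩⟩ hx
    · rcases (hθ _ _ _ _).1 hx with ⟨rfl, R', hR, rfl⟩ | ⟨-, -, -, hR⟩ | ⟨-, -, hR⟩
      · obtain ⟨R'', -, rfl⟩ := (theta_tr_tau_iff hθ).1 hR
        exact ⟨_, hR, Or.inl ⟨Y, R'', Or.inl ⟨rfl, rfl⟩⟩⟩
      all_goals exact ⟨x', hR, Or.inr (SBisim.refl x')⟩
    · rcases (hθ _ _ _ _).1 hx with ⟨rfl, R', hR, rfl⟩ | ⟨a, rfl, haY, -⟩ | ⟨hα, hidle, -⟩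
      · exact ⟨_, (theta_tr_tau_iff hθ).2 ⟨_, (theta_tr_tau_iff hθ).2 ⟨R', hR, rfl⟩, rfl⟩,
          Or.inl ⟨Y, R', Or.inr ⟨rfl, rfl⟩⟩⟩
      · exact ⟨x', (hθ _ _ _ _).2 (Or.inr (Or.inl ⟨a, rfl, haY, hx⟩)), Or.inr (SBisim.refl x')⟩
      · exact ⟨x', (hθ _ _ _ _).2 (Or.inr (Or.inr ⟨hα, hidle.to_theta hθ Y, hx⟩)),
          Or.inr (SBisim.refl x')⟩

variable (Tr theta) in
theorem isSTB_rbisimT : IsSTB Tr theta (RBisimT Tr theta) := by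
  refine ⟨?_, ?_, ?_⟩
  · rintro P Q ⟨B, hB, hPQ⟩
    exact ⟨B, hB, hB.1 P Q hPQ⟩
  · rintro P Q α P' ⟨B, hB, hPQ⟩ hα hP
    obtain ⟨Q', hQ, hPQ'⟩ := hB.2.1 P Q α P' hPQ hα hP
    exact ⟨Q', hQ, B, hB, hPQ'⟩
  · rintro P Q X P' ⟨B, hB, hPQ⟩ hidle hP
    obtain ⟨Q', hQ, hPQ'⟩ := hB.2.2 P Q X P' hPQ hidle hP
    exact ⟨Q', hQ, B, hB, hPQ'⟩

theorem RBisimT.symm {P Q : Proc} (h : RBisimT Tr theta P Q) : RBisimT Tr theta Q P :=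
  (isSTB_rbisimT Tr theta).1 P Q h

theorem RBisimT.of_steps (B : Proc → Proc → Prop) (hsymm : ∀ P Q, B P Q → B Q P)
    (hstep : ∀ P Q α P', B P Q → α ≠ Act.to → Tr P α P' →
      ∃ Q', Tr Q α Q' ∧ (B P' Q' ∨ RBisimT Tr theta P' Q'))
    (htimeout : ∀ P Q (X : Set A) P', B P Q → Idle Tr P X → Tr P Act.to P' →
      ∃ Q', Tr Q Act.to Q' ∧
        (B (theta X P') (theta X Q') ∨ RBisimT Tr theta (theta X P') (theta X Q')))
    {P Q : Proc} (h : B P Q) : RBisimT Tr theta P Q := by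
  refine ⟨fun P Q => B P Q ∨ RBisimT Tr theta P Q, ⟨?_, ?_, ?_⟩, Or.inl h⟩
  · rintro P Q (hPQ | hPQ)
    exacts [Or.inl (hsymm P Q hPQ), Or.inr hPQ.symm]
  · rintro P Q α P' (hPQ | hPQ) hα hP
    · exact hstep P Q α P' hPQ hα hP
    · obtain ⟨Q', hQ, hPQ'⟩ := (isSTB_rbisimT Tr theta).2.1 P Q α P' hPQ hα hP
      exact ⟨Q', hQ, Or.inr hPQ'⟩
  · rintro P Q X P' (hPQ | hPQ) hidle hP
    · exact htimeout P Q X P' hPQ hidle hP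
    · obtain ⟨Q', hQ, hPQ'⟩ := (isSTB_rbisimT Tr theta).2.2 P Q X P' hPQ hidle hP
      exact ⟨Q', hQ, Or.inr hPQ'⟩

theorem RBisimT.idle {P Q : Proc} {X : Set A} (h : RBisimT Tr theta P Q) (hP : Idle Tr P X) :
    Idle Tr Q X :=
  hP.of_initials_subset fun α Q' hα hQ =>
    let ⟨P', hP', _⟩ := (isSTB_rbisimT Tr theta).2.1 Q P α Q' h.symm hα hQ
    ⟨P', hP'⟩

theorem RBisimT.trans {P Q R : Proc} (hPQ : RBisimT Tr theta P Q) (hQR : RBisimT Tr theta Q R) :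
    RBisimT Tr theta P R := by
  refine RBisimT.of_steps (fun P R => ∃ Q, RBisimT Tr theta P Q ∧ RBisimT Tr theta Q R)
    ?_ ?_ ?_ ⟨Q, hPQ, hQR⟩
  · rintro P R ⟨Q, hPQ, hQR⟩
    exact ⟨Q, hQR.symm, hPQ.symm⟩
  · rintro P R α P' ⟨Q, hPQ, hQR⟩ hα hP
    obtain ⟨Q', hQ, hPQ'⟩ := (isSTB_rbisimT Tr theta).2.1 P Q α P' hPQ hα hP
    obtain ⟨R', hR, hQR'⟩ := (isSTB_rbisimT Tr theta).2.1 Q R α Q' hQR hα hQ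
    exact ⟨R', hR, Or.inl ⟨Q', hPQ', hQR'⟩⟩
  · rintro P R X P' ⟨Q, hPQ, hQR⟩ hidle hP
    obtain ⟨Q', hQ, hPQ'⟩ := (isSTB_rbisimT Tr theta).2.2 P Q X P' hPQ hidle hP
    obtain ⟨R', hR, hQR'⟩ := (isSTB_rbisimT Tr theta).2.2 Q R X Q' hQR (hPQ.idle hidle) hQ
    exact ⟨R', hR, Or.inl ⟨_, hPQ', hQR'⟩⟩

theorem SBisim.rbisimT (hθ : ThetaSpec Tr theta) {P Q : Proc} (h : SBisim Tr P Q) :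
    RBisimT Tr theta P Q := by
  refine RBisimT.of_steps (SBisim Tr) (fun _ _ => SBisim.symm) ?_ ?_ h
  · intro P Q α P' hPQ _ hP
    obtain ⟨Q', hQ, hPQ'⟩ := (isSB_sbisim Tr).2 P Q α P' hPQ hP
    exact ⟨Q', hQ, Or.inl hPQ'⟩
  · intro P Q X P' hPQ _ hP
    obtain ⟨Q', hQ, hPQ'⟩ := (isSB_sbisim Tr).2 P Q _ P' hPQ hP
    exact ⟨Q', hQ, Or.inl (hPQ'.theta_congr hθ X)⟩

theorem RBisimT.of_theta_theta (hθ : ThetaSpec Tr theta) {X : Set A} {P Q : Proc}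
    (h : RBisimT Tr theta (theta X (theta X P)) (theta X (theta X Q))) :
    RBisimT Tr theta (theta X P) (theta X Q) :=
  (((sbisim_theta_theta hθ X P).symm.rbisimT hθ).trans h).trans
    ((sbisim_theta_theta hθ X Q).rbisimT hθ)

end Bisimilarity

/-- Soundness of the reactive approximation axiom:
if `ψ_X(P) ↔ᵣ ψ_X(Q)` for all `X ⊆ A`, then `P ↔ᵣ Q`. -/
theorem reactive_approximation (Tr : Proc → Act A → Proc → Prop)
    (theta : Set A → Proc → Proc) (psi : Set A → Proc → Proc)
    (hθ : ThetaSpec Tr theta) (hψ : PsiSpec Tr theta psi)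
    (P Q : Proc) (h : ∀ X : Set A, RBisimT Tr theta (psi X P) (psi X Q)) :
    RBisimT Tr theta P Q := by
  refine RBisimT.of_steps (fun u v => ∀ X, RBisimT Tr theta (psi X u) (psi X v))
    (fun u v huv X => (huv X).symm) ?_ ?_ h
  · intro u v α u' huv hα hu
    obtain ⟨v', hv, hu'v'⟩ := (isSTB_rbisimT Tr theta).2.1 _ _ α u' (huv ∅) hα
      ((psi_tr_iff_of_ne_to hψ hα).2 hu)
    exact ⟨v', (psi_tr_iff_of_ne_to hψ hα).1 hv, Or.inr hu'v'⟩
  · intro u v X u' huv hidle hu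
    obtain ⟨w, hw, hθθ⟩ := (isSTB_rbisimT Tr theta).2.2 _ _ X _ (huv X) (hidle.to_psi hψ X)
      ((psi_tr_to_iff hψ).2 ⟨hidle, u', hu, rfl⟩)
    obtain ⟨-, v', hv, rfl⟩ := (psi_tr_to_iff hψ).1 hw
    exact ⟨v', hv, Or.inr (hθθ.of_theta_theta hθ)⟩
end

section
/- The law τ.P + t.Q ↔ᵣ τ.P holds: for any processes P and Q, the process that can either do τ to P or time-out to Q is strongly reactive bisimilar to the process that can only do τ to P. -/
variable {A : Type*} {Proc : Type*}

/-- Transitions of the action-prefix operator `α.P`. -/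
def PreSpec (Tr : Proc → Act A → Proc → Prop) (pre : Act A → Proc → Proc) : Prop :=
  ∀ (α : Act A) (P : Proc) (β : Act A) (Q : Proc),
    Tr (pre α P) β Q ↔ β = α ∧ Q = P

/-- Transitions of the choice operator `P + Q`. -/
def ChoiceSpec (Tr : Proc → Act A → Proc → Prop) (ch : Proc → Proc → Proc) : Prop :=
  ∀ (P Q : Proc) (α : Act A) (R : Proc),
    Tr (ch P Q) α R ↔ Tr P α R ∨ Tr Q α R

/-- The law `τ.P + t.Q ↔ᵣ τ.P`. -/
theorem law_tau_timeout (Tr : Proc → Act A → Proc → Prop)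
    (theta : Set A → Proc → Proc) (pre : Act A → Proc → Proc)
    (ch : Proc → Proc → Proc)
    (hθ : ThetaSpec Tr theta) (hpre : PreSpec Tr pre) (hch : ChoiceSpec Tr ch)
    (P Q : Proc) :
    RBisimT Tr theta (ch (pre Act.tau P) (pre Act.to Q)) (pre Act.tau P) := by
  set L := ch (pre Act.tau P) (pre Act.to Q) with hL
  set R := pre Act.tau P with hR
  refine ⟨fun x y => x = y ∨ (x = L ∧ y = R) ∨ (x = R ∧ y = L), ⟨?_, ?_, ?_⟩, Or.inr (Or.inl ⟨rfl, rfl⟩)⟩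
  · rintro x y (rfl | ⟨rfl, rfl⟩ | ⟨rfl, rfl⟩) <;> tauto
  · rintro x y α x' (rfl | ⟨rfl, rfl⟩ | ⟨rfl, rfl⟩) hα hx
    · exact ⟨x', hx, Or.inl rfl⟩
    · rcases (hch _ _ _ _).1 hx with h | h
      · rcases (hpre _ _ _ _).1 h with ⟨rfl, hx'⟩
        exact ⟨P, (hpre _ _ _ _).2 ⟨rfl, rfl⟩, Or.inl hx'⟩
      · rcases (hpre _ _ _ _).1 h with ⟨rfl, rfl⟩
        exact absurd rfl hα
    · rcases (hpre _ _ _ _).1 hx with ⟨rfl, hx'⟩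
      exact ⟨P, (hch _ _ _ _).2 (Or.inl ((hpre _ _ _ _).2 ⟨rfl, rfl⟩)), Or.inl hx'⟩
  · rintro x y X x' (rfl | ⟨rfl, rfl⟩ | ⟨rfl, rfl⟩) hid hx
    · exact ⟨x', hx, Or.inl rfl⟩
    · exact absurd ((hch _ _ _ _).2 (Or.inl ((hpre _ _ _ _).2 ⟨rfl, rfl⟩))) (hid.2 P)
    · rcases (hpre _ _ _ _).1 hx with ⟨h, rfl⟩
      exact absurd h (by simp)
end

section
/- The law a.P + t.(Q + τ.R + a.S) ↔ᵣ a.P + t.(Q + τ.R) holds for all processes P, Q, R, S and visible action a. -/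
variable {A : Type*} {Proc : Type*}

/-- The law `a.P + t.(Q + τ.R + a.S) ↔ᵣ a.P + t.(Q + τ.R)`. -/
theorem law_timeout_absorption (Tr : Proc → Act A → Proc → Prop)
    (theta : Set A → Proc → Proc) (pre : Act A → Proc → Proc)
    (ch : Proc → Proc → Proc)
    (hθ : ThetaSpec Tr theta) (hpre : PreSpec Tr pre) (hch : ChoiceSpec Tr ch)
    (a : A) (P Q R S : Proc) :
    RBisimT Tr theta
      (ch (pre (Act.vis a) P)
        (pre Act.to (ch Q (ch (pre Act.tau R) (pre (Act.vis a) S)))))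
      (ch (pre (Act.vis a) P) (pre Act.to (ch Q (pre Act.tau R)))) := by
  classical
  set L := ch Q (ch (pre Act.tau R) (pre (Act.vis a) S)) with hLdef
  set M := ch Q (pre Act.tau R) with hMdef
  set lhs := ch (pre (Act.vis a) P) (pre Act.to L) with hlhsdef
  set rhs := ch (pre (Act.vis a) P) (pre Act.to M) with hrhsdef
  have hLtau : Tr L Act.tau R :=
    (hch _ _ _ _).mpr (Or.inr ((hch _ _ _ _).mpr (Or.inl ((hpre _ _ _ _).mpr ⟨rfl, rfl⟩))))
  have hMtau : Tr M Act.tau R :=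
    (hch _ _ _ _).mpr (Or.inr ((hpre _ _ _ _).mpr ⟨rfl, rfl⟩))
  have hlhsa : Tr lhs (Act.vis a) P :=
    (hch _ _ _ _).mpr (Or.inl ((hpre _ _ _ _).mpr ⟨rfl, rfl⟩))
  have hrhsa : Tr rhs (Act.vis a) P :=
    (hch _ _ _ _).mpr (Or.inl ((hpre _ _ _ _).mpr ⟨rfl, rfl⟩))
  have hlhsto : Tr lhs Act.to L :=
    (hch _ _ _ _).mpr (Or.inr ((hpre _ _ _ _).mpr ⟨rfl, rfl⟩))
  have hrhsto : Tr rhs Act.to M :=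
    (hch _ _ _ _).mpr (Or.inr ((hpre _ _ _ _).mpr ⟨rfl, rfl⟩))
  -- transitions of L and M (inversion)
  have hLinv : ∀ α T, Tr L α T → Tr Q α T ∨ (α = Act.tau ∧ T = R) ∨ (α = Act.vis a ∧ T = S) := by
    intro α T h
    rcases (hch _ _ _ _).mp h with h | h
    · exact Or.inl h
    · rcases (hch _ _ _ _).mp h with h | h
      · exact Or.inr (Or.inl ((hpre _ _ _ _).mp h))
      · exact Or.inr (Or.inr ((hpre _ _ _ _).mp h))
  have hMinv : ∀ α T, Tr M α T → Tr Q α T ∨ (α = Act.tau ∧ T = R) := by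
    intro α T h
    rcases (hch _ _ _ _).mp h with h | h
    · exact Or.inl h
    · exact Or.inr ((hpre _ _ _ _).mp h)
  -- forward transfer for theta pairs
  have fwd : ∀ X : Set A, a ∉ X → ∀ α T, Tr (theta X L) α T → Tr (theta X M) α T := by
    intro X hX α T h
    rw [hθ] at h ⊢
    rcases h with ⟨hα, T', hT', rfl⟩ | ⟨b, hα, hbX, hTr⟩ | ⟨hne, hIdle, _⟩
    · refine Or.inl ⟨hα, T', ?_, rfl⟩
      rcases hLinv _ _ hT' with h | ⟨_, rfl⟩ | ⟨h, _⟩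
      · exact (hch _ _ _ _).mpr (Or.inl h)
      · exact hMtau
      · exact absurd h (by simp)
    · refine Or.inr (Or.inl ⟨b, hα, hbX, ?_⟩)
      subst hα
      rcases hLinv _ _ hTr with h | ⟨h, _⟩ | ⟨h, rfl⟩
      · exact (hch _ _ _ _).mpr (Or.inl h)
      · exact absurd h (by simp)
      · cases h; exact absurd hbX hX
    · exact absurd hLtau (hIdle.2 R)
  have bwd : ∀ X : Set A, a ∉ X → ∀ α T, Tr (theta X M) α T → Tr (theta X L) α T := by
    intro X hX α T h
    rw [hθ] at h ⊢
    rcases h with ⟨hα, T', hT', rfl⟩ | ⟨b, hα, hbX, hTr⟩ | ⟨hne, hIdle, _⟩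
    · refine Or.inl ⟨hα, T', ?_, rfl⟩
      rcases hMinv _ _ hT' with h | ⟨_, rfl⟩
      · exact (hch _ _ _ _).mpr (Or.inl h)
      · exact hLtau
    · refine Or.inr (Or.inl ⟨b, hα, hbX, ?_⟩)
      subst hα
      rcases hMinv _ _ hTr with h | ⟨h, _⟩
      · exact (hch _ _ _ _).mpr (Or.inl h)
      · exact absurd h (by simp)
    · exact absurd hMtau (hIdle.2 R)
  -- theta X L has no t-transitions
  have hθLnoto : ∀ X : Set A, ∀ T, ¬ Tr (theta X L) Act.to T := by
    intro X T h
    rcases (hθ _ _ _ _).mp h with ⟨h, _⟩ | ⟨b, h, _⟩ | ⟨_, hIdle, _⟩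
    · exact absurd h (by simp)
    · exact absurd h (by simp)
    · exact hIdle.2 R hLtau
  have hθMnoto : ∀ X : Set A, ∀ T, ¬ Tr (theta X M) Act.to T := by
    intro X T h
    rcases (hθ _ _ _ _).mp h with ⟨h, _⟩ | ⟨b, h, _⟩ | ⟨_, hIdle, _⟩
    · exact absurd h (by simp)
    · exact absurd h (by simp)
    · exact hIdle.2 R hMtau
  refine ⟨fun U V => U = V ∨ (U = lhs ∧ V = rhs) ∨ (U = rhs ∧ V = lhs) ∨
      (∃ X : Set A, a ∉ X ∧ ((U = theta X L ∧ V = theta X M) ∨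
        (U = theta X M ∧ V = theta X L))),
    ⟨?_, ?_, ?_⟩, Or.inr (Or.inl ⟨rfl, rfl⟩)⟩
  · rintro U V (rfl | ⟨rfl, rfl⟩ | ⟨rfl, rfl⟩ | ⟨X, hX, ⟨rfl, rfl⟩ | ⟨rfl, rfl⟩⟩)
    · exact Or.inl rfl
    · exact Or.inr (Or.inr (Or.inl ⟨rfl, rfl⟩))
    · exact Or.inr (Or.inl ⟨rfl, rfl⟩)
    · exact Or.inr (Or.inr (Or.inr ⟨X, hX, Or.inr ⟨rfl, rfl⟩⟩))
    · exact Or.inr (Or.inr (Or.inr ⟨X, hX, Or.inl ⟨rfl, rfl⟩⟩))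
  · rintro U V α U' (rfl | ⟨rfl, rfl⟩ | ⟨rfl, rfl⟩ | ⟨X, hX, ⟨rfl, rfl⟩ | ⟨rfl, rfl⟩⟩) hne hTr
    · exact ⟨U', hTr, Or.inl rfl⟩
    · rcases (hch _ _ _ _).mp hTr with h | h
      · obtain ⟨rfl, rfl⟩ := (hpre _ _ _ _).mp h
        exact ⟨U', hrhsa, Or.inl rfl⟩
      · obtain ⟨rfl, rfl⟩ := (hpre _ _ _ _).mp h
        exact absurd rfl hne
    · rcases (hch _ _ _ _).mp hTr with h | h
      · obtain ⟨rfl, rfl⟩ := (hpre _ _ _ _).mp h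
        exact ⟨U', hlhsa, Or.inl rfl⟩
      · obtain ⟨rfl, rfl⟩ := (hpre _ _ _ _).mp h
        exact absurd rfl hne
    · exact ⟨U', fwd X hX α U' hTr, Or.inl rfl⟩
    · exact ⟨U', bwd X hX α U' hTr, Or.inl rfl⟩
  · rintro U V X U' (rfl | ⟨rfl, rfl⟩ | ⟨rfl, rfl⟩ | ⟨Y, hY, ⟨rfl, rfl⟩ | ⟨rfl, rfl⟩⟩) hIdle hTr
    · exact ⟨U', hTr, Or.inl rfl⟩
    · have hX : a ∉ X := fun haX => hIdle.1 a haX P hlhsa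
      rcases (hch _ _ _ _).mp hTr with h | h
      · obtain ⟨h, _⟩ := (hpre _ _ _ _).mp h
        exact absurd h (by simp)
      · obtain ⟨_, rfl⟩ := (hpre _ _ _ _).mp h
        exact ⟨M, hrhsto, Or.inr (Or.inr (Or.inr ⟨X, hX, Or.inl ⟨rfl, rfl⟩⟩))⟩
    · have hX : a ∉ X := fun haX => hIdle.1 a haX P hrhsa
      rcases (hch _ _ _ _).mp hTr with h | h
      · obtain ⟨h, _⟩ := (hpre _ _ _ _).mp h
        exact absurd h (by simp)
      · obtain ⟨_, rfl⟩ := (hpre _ _ _ _).mp h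
        exact ⟨L, hlhsto, Or.inr (Or.inr (Or.inr ⟨X, hX, Or.inr ⟨rfl, rfl⟩⟩))⟩
    · exact absurd hTr (hθLnoto Y U')
    · exact absurd hTr (hθMnoto Y U')
end
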